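/- arXiv:1506.03486 — 6 statements merged into one kernel-verified Lean document; each statement's English description precedes it below -/
import Mathlib

section
/- The statistic h = (X − Y)ᵀ(X′ − Y′) satisfies E[h] = ‖δ‖² and Var(h) = 4·tr(Σ²) + 4·δᵀΣδ. -/
/-!
Write `Z = X − Y` and `Z' = X' − Y'`. These are independent and identically distributed, with
mean `δ`; since `X` and `Y` are independent, the cross-covariances vanish and
`E[Z_j Z_k] = 2 Σ_jk + δ_j δ_k`. Independence of `Z` and `Z'` factorizes the moments of
`h = ⟨Z, Z'⟩`: `E[h] = ∑_j E[Z_j]² = ‖δ‖²` and `E[h²] = ∑_{j,k} E[Z_j Z_k]²`, and expanding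
`∑_{j,k} (2 Σ_jk + δ_j δ_k)² − ‖δ‖⁴` with `Σ` symmetric gives `4 tr(Σ²) + 4 δᵀΣδ`.
-/

open MeasureTheory ProbabilityTheory Matrix

namespace ProbabilityTheory

variable {Ω ι : Type*} [MeasurableSpace Ω] {μ : Measure Ω}

lemma IndepFun.integral_sum_mul [Fintype ι] {Z Z' : Ω → ι → ℝ} (hZZ' : Z ⟂ᵢ[μ] Z')
    (hZ : ∀ j, Integrable (fun ω ↦ Z ω j) μ) (hZ' : ∀ j, Integrable (fun ω ↦ Z' ω j) μ) :
    ∫ ω, ∑ j, Z ω j * Z' ω j ∂μ = ∑ j, (∫ ω, Z ω j ∂μ) * ∫ ω, Z' ω j ∂μ := by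
  have hcoord : ∀ j, (fun ω ↦ Z ω j) ⟂ᵢ[μ] (fun ω ↦ Z' ω j) := fun j ↦
    hZZ'.comp (measurable_pi_apply j) (measurable_pi_apply j)
  have hint : ∀ j, Integrable (fun ω ↦ Z ω j * Z' ω j) μ := fun j ↦
    (hcoord j).integrable_mul (hZ j) (hZ' j)
  rw [integral_finsetSum _ fun j _ ↦ hint j]
  exact Finset.sum_congr rfl fun j _ ↦
    (hcoord j).integral_fun_mul_eq_mul_integral (hZ j).1 (hZ' j).1

lemma IndepFun.integral_sum_mul_sq [Fintype ι] {Z Z' : Ω → ι → ℝ} (hZZ' : Z ⟂ᵢ[μ] Z')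
    (hZ : ∀ j, MemLp (fun ω ↦ Z ω j) 2 μ) (hZ' : ∀ j, MemLp (fun ω ↦ Z' ω j) 2 μ) :
    ∫ ω, (∑ j, Z ω j * Z' ω j) ^ 2 ∂μ =
      ∑ j, ∑ k, (∫ ω, Z ω j * Z ω k ∂μ) * ∫ ω, Z' ω j * Z' ω k ∂μ := by
  have hcoord : ∀ j k, (fun ω ↦ Z ω j * Z ω k) ⟂ᵢ[μ] (fun ω ↦ Z' ω j * Z' ω k) := fun j k ↦
    hZZ'.comp ((measurable_pi_apply j).mul (measurable_pi_apply k))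
      ((measurable_pi_apply j).mul (measurable_pi_apply k))
  have hint : ∀ j k, Integrable (fun ω ↦ Z ω j * Z ω k * (Z' ω j * Z' ω k)) μ := fun j k ↦
    (hcoord j k).integrable_mul ((hZ j).integrable_mul (hZ k)) ((hZ' j).integrable_mul (hZ' k))
  have hexpand : ∀ ω, (∑ j, Z ω j * Z' ω j) ^ 2 =
      ∑ j, ∑ k, Z ω j * Z ω k * (Z' ω j * Z' ω k) := fun ω ↦ by
    simp_rw [sq, Finset.sum_mul_sum]
    exact Finset.sum_congr rfl fun j _ ↦ Finset.sum_congr rfl fun k _ ↦ by ring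
  simp_rw [hexpand]
  rw [integral_finsetSum _ fun j _ ↦ integrable_finsetSum _ fun k _ ↦ hint j k]
  refine Finset.sum_congr rfl fun j _ ↦ ?_
  rw [integral_finsetSum _ fun k _ ↦ hint j k]
  exact Finset.sum_congr rfl fun k _ ↦ (hcoord j k).integral_fun_mul_eq_mul_integral
    ((hZ j).1.mul (hZ k).1) ((hZ' j).1.mul (hZ' k).1)

lemma IdentDistrib.integral_sum_mul_of_indepFun [Fintype ι] {Z Z' : Ω → ι → ℝ}
    (hid : IdentDistrib Z Z' μ μ) (hZZ' : Z ⟂ᵢ[μ] Z') (hZ : ∀ j, Integrable (fun ω ↦ Z ω j) μ) :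
    ∫ ω, ∑ j, Z ω j * Z' ω j ∂μ = ∑ j, (∫ ω, Z ω j ∂μ) ^ 2 := by
  have hcoord : ∀ j, IdentDistrib (fun ω ↦ Z ω j) (fun ω ↦ Z' ω j) μ μ := fun j ↦
    hid.comp (measurable_pi_apply j)
  rw [hZZ'.integral_sum_mul hZ fun j ↦ (hcoord j).integrable_snd (hZ j)]
  simp_rw [← (hcoord _).integral_eq, sq]

lemma IdentDistrib.integral_sum_mul_sq_of_indepFun [Fintype ι] {Z Z' : Ω → ι → ℝ}
    (hid : IdentDistrib Z Z' μ μ) (hZZ' : Z ⟂ᵢ[μ] Z') (hZ : ∀ j, MemLp (fun ω ↦ Z ω j) 2 μ) :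
    ∫ ω, (∑ j, Z ω j * Z' ω j) ^ 2 ∂μ = ∑ j, ∑ k, (∫ ω, Z ω j * Z ω k ∂μ) ^ 2 := by
  have hcoord : ∀ j, IdentDistrib (fun ω ↦ Z ω j) (fun ω ↦ Z' ω j) μ μ := fun j ↦
    hid.comp (measurable_pi_apply j)
  have hprod : ∀ j k, IdentDistrib (fun ω ↦ Z ω j * Z ω k) (fun ω ↦ Z' ω j * Z' ω k) μ μ :=
    fun j k ↦ hid.comp ((measurable_pi_apply j).mul (measurable_pi_apply k))
  rw [hZZ'.integral_sum_mul_sq hZ fun j ↦ (hcoord j).memLp_snd (hZ j)]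
  simp_rw [← (hprod _ _).integral_eq, sq]

variable [IsProbabilityMeasure μ]

lemma IndepFun.covariance_sub_sub {X Y : Ω → ι → ℝ} (hXY : X ⟂ᵢ[μ] Y)
    (hX : ∀ j, MemLp (fun ω ↦ X ω j) 2 μ) (hY : ∀ j, MemLp (fun ω ↦ Y ω j) 2 μ) (j k : ι) :
    cov[fun ω ↦ X ω j - Y ω j, fun ω ↦ X ω k - Y ω k; μ] =
      cov[fun ω ↦ X ω j, fun ω ↦ X ω k; μ] + cov[fun ω ↦ Y ω j, fun ω ↦ Y ω k; μ] := by
  have hXjYk : cov[fun ω ↦ X ω j, fun ω ↦ Y ω k; μ] = 0 :=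
    (hXY.comp (measurable_pi_apply j) (measurable_pi_apply k)).covariance_eq_zero (hX j) (hY k)
  have hYjXk : cov[fun ω ↦ Y ω j, fun ω ↦ X ω k; μ] = 0 :=
    (hXY.symm.comp (measurable_pi_apply j) (measurable_pi_apply k)).covariance_eq_zero
      (hY j) (hX k)
  rw [covariance_fun_sub_fun_sub (hX j) (hY j) (hX k) (hY k), hXjYk, hYjXk]
  ring

lemma IndepFun.integral_sub_mul_sub {X Y : Ω → ι → ℝ} (hXY : X ⟂ᵢ[μ] Y)
    (hX : ∀ j, MemLp (fun ω ↦ X ω j) 2 μ) (hY : ∀ j, MemLp (fun ω ↦ Y ω j) 2 μ) (j k : ι) :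
    ∫ ω, (X ω j - Y ω j) * (X ω k - Y ω k) ∂μ =
      cov[fun ω ↦ X ω j, fun ω ↦ X ω k; μ] + cov[fun ω ↦ Y ω j, fun ω ↦ Y ω k; μ] +
        (∫ ω, X ω j - Y ω j ∂μ) * ∫ ω, X ω k - Y ω k ∂μ := by
  have hZ : ∀ j, MemLp (fun ω ↦ X ω j - Y ω j) 2 μ := fun j ↦ (hX j).sub (hY j)
  rw [← hXY.covariance_sub_sub hX hY, covariance_eq_sub (hZ j) (hZ k)]
  simp

lemma iIndepFun.indepFun_comp_prodMk_and_identDistrib {E F : Type*} [MeasurableSpace E]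
    [MeasurableSpace F] {X Y X' Y' : Ω → E} (hindep : iIndepFun ![X, Y, X', Y'] μ)
    (hXX' : IdentDistrib X X' μ μ) (hYY' : IdentDistrib Y Y' μ μ) {f : E × E → F}
    (hf : Measurable f) :
    (fun ω ↦ f (X ω, Y ω)) ⟂ᵢ[μ] (fun ω ↦ f (X' ω, Y' ω)) ∧
      IdentDistrib (fun ω ↦ f (X ω, Y ω)) (fun ω ↦ f (X' ω, Y' ω)) μ μ := by
  have hmeas : ∀ i, AEMeasurable (![X, Y, X', Y'] i) μ := by
    intro i
    fin_cases i
    exacts [hXX'.aemeasurable_fst, hYY'.aemeasurable_fst, hXX'.aemeasurable_snd,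
      hYY'.aemeasurable_snd]
  refine ⟨(hindep.indepFun_prodMk_prodMk₀ hmeas 0 1 2 3 (by decide) (by decide) (by decide)
    (by decide)).comp hf hf, (hXX'.prodMk hYY' ?_ ?_).comp hf⟩
  exacts [hindep.indepFun (show (0 : Fin 4) ≠ 1 by decide),
    hindep.indepFun (show (2 : Fin 4) ≠ 3 by decide)]

end ProbabilityTheory

lemma Matrix.sum_sum_add_mul_sq_sub_sq {ι : Type*} [Fintype ι] {C : Matrix ι ι ℝ}
    (hC : C.IsSymm) (m : ι → ℝ) :
    ∑ j, ∑ k, (C j k + m j * m k) ^ 2 - (∑ j, m j ^ 2) ^ 2 =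
      trace (C * C) + 2 * m ⬝ᵥ C *ᵥ m := by
  have hsq : (∑ j, m j ^ 2) ^ 2 = ∑ j, ∑ k, (m j * m k) ^ 2 := by
    simp_rw [sq, Finset.sum_mul_sum, mul_mul_mul_comm]
  simp only [hsq, trace, diag, mul_apply, dotProduct, mulVec, Finset.mul_sum,
    ← Finset.sum_sub_distrib, ← Finset.sum_add_distrib]
  refine Finset.sum_congr rfl fun j _ ↦ Finset.sum_congr rfl fun k _ ↦ ?_
  rw [hC.apply k j]
  ring

theorem h_statistic_moments_general
    (d : ℕ) (Ω : Type) [MeasurableSpace Ω] (μ : Measure Ω) [IsProbabilityMeasure μ]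
    (X X' Y Y' : Ω → Fin d → ℝ)
    (hindep : iIndepFun ![X, Y, X', Y'] μ)
    (hXX' : IdentDistrib X X' μ μ) (hYY' : IdentDistrib Y Y' μ μ)
    (hL2 : ∀ W ∈ [X, X', Y, Y'], ∀ j, MemLp (fun ω => W ω j) 2 μ)
    (μ₁ μ₂ : Fin d → ℝ)
    (hμ₁ : ∀ j, μ₁ j = ∫ ω, X ω j ∂μ) (hμ₂ : ∀ j, μ₂ j = ∫ ω, Y ω j ∂μ)
    (S₁ S₂ S : Matrix (Fin d) (Fin d) ℝ)
    (hS₁ : ∀ j k, S₁ j k = ∫ ω, (X ω j - μ₁ j) * (X ω k - μ₁ k) ∂μ)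
    (hS₂ : ∀ j k, S₂ j k = ∫ ω, (Y ω j - μ₂ j) * (Y ω k - μ₂ k) ∂μ)
    (hS : S = (1 / 2 : ℝ) • (S₁ + S₂))
    (δ : Fin d → ℝ) (hδ : δ = fun j => μ₁ j - μ₂ j) :
    (∫ ω, ∑ j, (X ω j - Y ω j) * (X' ω j - Y' ω j) ∂μ) = ∑ j, δ j ^ 2 ∧
    (∫ ω, (∑ j, (X ω j - Y ω j) * (X' ω j - Y' ω j)) ^ 2 ∂μ) -
        (∫ ω, ∑ j, (X ω j - Y ω j) * (X' ω j - Y' ω j) ∂μ) ^ 2 =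
      4 * Matrix.trace (S * S) + 4 * dotProduct δ (S.mulVec δ) := by
  have hX : ∀ j, MemLp (fun ω ↦ X ω j) 2 μ := hL2 X (by simp)
  have hY : ∀ j, MemLp (fun ω ↦ Y ω j) 2 μ := hL2 Y (by simp)
  have hZ : ∀ j, MemLp (fun ω ↦ X ω j - Y ω j) 2 μ := fun j ↦ (hX j).sub (hY j)
  obtain ⟨hZZ', hid⟩ : (fun ω j ↦ X ω j - Y ω j) ⟂ᵢ[μ] (fun ω j ↦ X' ω j - Y' ω j) ∧
      IdentDistrib (fun ω j ↦ X ω j - Y ω j) (fun ω j ↦ X' ω j - Y' ω j) μ μ :=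
    hindep.indepFun_comp_prodMk_and_identDistrib hXX' hYY'
      (f := fun p j ↦ p.1 j - p.2 j) (by fun_prop)
  have hmean : ∀ j, ∫ ω, X ω j - Y ω j ∂μ = δ j := fun j ↦ by
    simp only [hδ, hμ₁, hμ₂]
    exact integral_sub ((hX j).integrable one_le_two) ((hY j).integrable one_le_two)
  have hXY : X ⟂ᵢ[μ] Y := hindep.indepFun (show (0 : Fin 4) ≠ 1 by decide)
  have hsecond : ∀ j k,
      ∫ ω, (X ω j - Y ω j) * (X ω k - Y ω k) ∂μ = (S₁ + S₂) j k + δ j * δ k := fun j k ↦ by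
    rw [hXY.integral_sub_mul_sub hX hY, hmean, hmean]
    simp [covariance, hS₁, hS₂, hμ₁, hμ₂]
  have hsymm : (S₁ + S₂).IsSymm := IsSymm.ext fun j k ↦ by
    simp only [Matrix.add_apply, hS₁, hS₂, mul_comm]
  have hC : S₁ + S₂ = (2 : ℝ) • S := by
    rw [hS, smul_smul]
    norm_num
  have hEh : ∫ ω, ∑ j, (X ω j - Y ω j) * (X' ω j - Y' ω j) ∂μ = ∑ j, δ j ^ 2 := by
    simp only [hid.integral_sum_mul_of_indepFun hZZ' fun j ↦ (hZ j).integrable one_le_two, hmean]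
  refine ⟨hEh, ?_⟩
  rw [hid.integral_sum_mul_sq_of_indepFun hZZ' hZ, hEh]
  simp only [hsecond]
  rw [sum_sum_add_mul_sq_sub_sq hsymm, hC]
  simp only [Matrix.smul_mul, Matrix.mul_smul, trace_smul, smul_mulVec, dotProduct_smul,
    smul_eq_mul]
  ring

/-- Moments of `h = (X − Y)ᵀ(X′ − Y′)` where `X, X′ ~ P` and `Y, Y′ ~ Q` are mutually
independent random vectors in `ℝ^d`: `E[h] = ‖δ‖²` and
`Var(h) = 4 tr(Σ²) + 4 δᵀΣδ`, with `δ = μ₁ − μ₂` and `Σ = (Σ₁ + Σ₂)/2`. -/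
theorem h_statistic_moments
    (d : ℕ) (Ω : Type) [MeasurableSpace Ω] (μ : Measure Ω) [IsProbabilityMeasure μ]
    (X X' Y Y' : Ω → Fin d → ℝ)
    (hmeas : ∀ W ∈ [X, X', Y, Y'], Measurable W)
    (hindep : iIndepFun ![X, Y, X', Y'] μ)
    (hXX' : IdentDistrib X X' μ μ) (hYY' : IdentDistrib Y Y' μ μ)
    (hL2 : ∀ W ∈ [X, X', Y, Y'], ∀ j, MemLp (fun ω => W ω j) 2 μ)
    (μ₁ μ₂ : Fin d → ℝ)
    (hμ₁ : ∀ j, μ₁ j = ∫ ω, X ω j ∂μ) (hμ₂ : ∀ j, μ₂ j = ∫ ω, Y ω j ∂μ)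
    (S₁ S₂ S : Matrix (Fin d) (Fin d) ℝ)
    (hS₁ : ∀ j k, S₁ j k = ∫ ω, (X ω j - μ₁ j) * (X ω k - μ₁ k) ∂μ)
    (hS₂ : ∀ j k, S₂ j k = ∫ ω, (Y ω j - μ₂ j) * (Y ω k - μ₂ k) ∂μ)
    (hS : S = (1 / 2 : ℝ) • (S₁ + S₂))
    (δ : Fin d → ℝ) (hδ : δ = fun j => μ₁ j - μ₂ j) :
    (∫ ω, ∑ j, (X ω j - Y ω j) * (X' ω j - Y' ω j) ∂μ) = ∑ j, δ j ^ 2 ∧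
    (∫ ω, (∑ j, (X ω j - Y ω j) * (X' ω j - Y' ω j)) ^ 2 ∂μ) -
        (∫ ω, ∑ j, (X ω j - Y ω j) * (X' ω j - Y' ω j) ∂μ) ^ 2 =
      4 * Matrix.trace (S * S) + 4 * dotProduct δ (S.mulVec δ) :=
  h_statistic_moments_general d Ω μ X X' Y Y' hindep hXX' hYY' hL2 μ₁ μ₂ hμ₁ hμ₂ S₁ S₂ S hS₁ hS₂ hS
    δ hδ
end

section
/- The second moment of h = (X − Y)ᵀ(X′ − Y′) satisfies E[h²] = tr((2Σ + δδᵀ)²), and consequently Var(h) = tr((2Σ + δδᵀ)²) − ‖δ‖⁴. -/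
/-!
Put `A = X − Y` and `B = X′ − Y′`. The pairs `(X, Y)` and `(X′, Y′)` are independent and, being
pairs of independent vectors with the same marginals, have the same joint law; so `A` and `B` are
i.i.d. Expanding `h² = ∑ⱼ ∑ₖ (Aⱼ Aₖ)(Bⱼ Bₖ)` and using independence gives `E[h²] = ∑ⱼ ∑ₖ Mⱼₖ²`
for the symmetric matrix `M = E[A Aᵀ]`, i.e. `tr(M²)`; and `M = Σ₁ + Σ₂ + δδᵀ = 2Σ + δδᵀ`
because the cross-covariances of the independent `X` and `Y` vanish. Likewise `E[h] = ∑ⱼ δⱼ²`.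
-/

open MeasureTheory ProbabilityTheory

namespace ProbabilityTheory

lemma IdentDistrib.prodMk_of_indepFun {Ω Ω' α β : Type*} [MeasurableSpace Ω] [MeasurableSpace Ω']
    [MeasurableSpace α] [MeasurableSpace β] {μ : Measure Ω} {μ' : Measure Ω'}
    [IsFiniteMeasure μ] [IsFiniteMeasure μ'] {X : Ω → α} {Y : Ω → β} {X' : Ω' → α} {Y' : Ω' → β}
    (hXY : X ⟂ᵢ[μ] Y) (hXY' : X' ⟂ᵢ[μ'] Y')
    (hX : IdentDistrib X X' μ μ') (hY : IdentDistrib Y Y' μ μ') :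
    IdentDistrib (fun ω ↦ (X ω, Y ω)) (fun ω ↦ (X' ω, Y' ω)) μ μ' where
  aemeasurable_fst := hX.aemeasurable_fst.prodMk hY.aemeasurable_fst
  aemeasurable_snd := hX.aemeasurable_snd.prodMk hY.aemeasurable_snd
  map_eq := by
    rw [hXY.map_prod_eq_prod_map_map hX.aemeasurable_fst hY.aemeasurable_fst,
      hXY'.map_prod_eq_prod_map_map hX.aemeasurable_snd hY.aemeasurable_snd, hX.map_eq, hY.map_eq]

lemma iIndepFun.indepFun_and_identDistrib_sub {Ω ι : Type*} [MeasurableSpace Ω]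
    {μ : Measure Ω} [IsProbabilityMeasure μ] {X Y X' Y' : Ω → ι → ℝ}
    (hmeas : ∀ i, Measurable (![X, Y, X', Y'] i)) (hindep : iIndepFun ![X, Y, X', Y'] μ)
    (hX : IdentDistrib X X' μ μ) (hY : IdentDistrib Y Y' μ μ) :
    (fun ω j ↦ X ω j - Y ω j) ⟂ᵢ[μ] (fun ω j ↦ X' ω j - Y' ω j) ∧
      IdentDistrib (fun ω j ↦ X ω j - Y ω j) (fun ω j ↦ X' ω j - Y' ω j) μ μ := by
  have hdiff : Measurable fun p : (ι → ℝ) × (ι → ℝ) ↦ fun j ↦ p.1 j - p.2 j := by fun_prop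
  refine ⟨(hindep.indepFun_prodMk_prodMk hmeas 0 1 2 3 (by decide) (by decide) (by decide)
    (by decide)).comp hdiff hdiff, ?_⟩
  exact (IdentDistrib.prodMk_of_indepFun (hindep.indepFun (show (0 : Fin 4) ≠ 1 by decide))
    (hindep.indepFun (show (2 : Fin 4) ≠ 3 by decide)) hX hY).comp hdiff

section SecondMoment

variable {Ω ι : Type*} [MeasurableSpace Ω] {μ : Measure Ω}

lemma integral_mul_eq_covariance_add [IsProbabilityMeasure μ] {f g : Ω → ℝ}
    (hf : MemLp f 2 μ) (hg : MemLp g 2 μ) :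
    ∫ ω, f ω * g ω ∂μ = cov[f, g; μ] + μ[f] * μ[g] := by
  rw [covariance_eq_sub hf hg]
  simp

noncomputable def secondMomentMatrix (A : Ω → ι → ℝ) (μ : Measure Ω) : Matrix ι ι ℝ :=
  Matrix.of fun j k ↦ ∫ ω, A ω j * A ω k ∂μ

lemma secondMomentMatrix_apply (A : Ω → ι → ℝ) (μ : Measure Ω) (j k : ι) :
    secondMomentMatrix A μ j k = ∫ ω, A ω j * A ω k ∂μ := rfl

lemma isSymm_secondMomentMatrix (A : Ω → ι → ℝ) (μ : Measure Ω) :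
    (secondMomentMatrix A μ).IsSymm :=
  Matrix.IsSymm.ext fun j k ↦ by simp only [secondMomentMatrix_apply, mul_comm]

lemma secondMomentMatrix_sub_apply [IsProbabilityMeasure μ] {X Y : Ω → ι → ℝ}
    (hXY : X ⟂ᵢ[μ] Y) (hX : ∀ j, MemLp (X · j) 2 μ) (hY : ∀ j, MemLp (Y · j) 2 μ) (j k : ι) :
    secondMomentMatrix (fun ω j ↦ X ω j - Y ω j) μ j k =
      cov[(X · j), (X · k); μ] + cov[(Y · j), (Y · k); μ] +
        (μ[(X · j)] - μ[(Y · j)]) * (μ[(X · k)] - μ[(Y · k)]) := by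
  have hcross {U V : Ω → ι → ℝ} (hUV : U ⟂ᵢ[μ] V) (hU : ∀ j, MemLp (U · j) 2 μ)
      (hV : ∀ j, MemLp (V · j) 2 μ) (j k : ι) : cov[(U · j), (V · k); μ] = 0 :=
    (hUV.comp (measurable_pi_apply j) (measurable_pi_apply k)).covariance_eq_zero (hU j) (hV k)
  have hXY_sub (j : ι) : MemLp (fun ω ↦ X ω j - Y ω j) 2 μ := (hX j).sub (hY j)
  have hmean (j : ι) : μ[fun ω ↦ X ω j - Y ω j] = μ[(X · j)] - μ[(Y · j)] :=
    integral_sub ((hX j).integrable one_le_two) ((hY j).integrable one_le_two)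
  rw [secondMomentMatrix_apply, integral_mul_eq_covariance_add (hXY_sub j) (hXY_sub k),
    covariance_fun_sub_fun_sub (hX j) (hY j) (hX k) (hY k), hcross hXY hX hY,
    hcross hXY.symm hY hX, hmean, hmean]
  ring

variable [Fintype ι] {A B : Ω → ι → ℝ}

lemma integral_sum_mul_of_indepFun (hAB : A ⟂ᵢ[μ] B) (hA : ∀ j, Integrable (A · j) μ)
    (hB : ∀ j, Integrable (B · j) μ) :
    ∫ ω, ∑ j, A ω j * B ω j ∂μ = ∑ j, μ[(A · j)] * μ[(B · j)] := by
  have hABj (j : ι) : (A · j) ⟂ᵢ[μ] (B · j) :=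
    hAB.comp (measurable_pi_apply j) (measurable_pi_apply j)
  have hint (j : ι) : Integrable (fun ω ↦ A ω j * B ω j) μ := (hABj j).integrable_mul (hA j) (hB j)
  rw [integral_finsetSum _ fun j _ ↦ hint j]
  exact Finset.sum_congr rfl fun j _ ↦ (hABj j).integral_fun_mul_eq_mul_integral
    (hA j).aestronglyMeasurable (hB j).aestronglyMeasurable

lemma integral_sq_sum_mul_of_identDistrib (hAB : A ⟂ᵢ[μ] B)
    (hident : IdentDistrib A B μ μ) (hA : ∀ j, MemLp (A · j) 2 μ) :
    ∫ ω, (∑ j, A ω j * B ω j) ^ 2 ∂μ =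
      (secondMomentMatrix A μ * secondMomentMatrix A μ).trace := by
  let outer : (ι → ℝ) → ι × ι → ℝ := fun v p ↦ v p.1 * v p.2
  have houter : Measurable outer := by fun_prop
  have hB (j : ι) : MemLp (B · j) 2 μ := (hident.comp (measurable_pi_apply j)).memLp_iff.mp (hA j)
  have hsq (ω : Ω) : (∑ j, A ω j * B ω j) ^ 2 = ∑ p : ι × ι, outer (A ω) p * outer (B ω) p := by
    rw [sq, Finset.sum_mul_sum, ← Finset.sum_product']
    exact Finset.sum_congr rfl fun p _ ↦ by ring
  have hmean (p : ι × ι) : μ[fun ω ↦ outer (B ω) p] = secondMomentMatrix A μ p.1 p.2 :=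
    (hident.comp ((measurable_pi_apply p).comp houter)).integral_eq.symm
  simp_rw [hsq]
  refine (integral_sum_mul_of_indepFun (A := fun ω ↦ outer (A ω)) (B := fun ω ↦ outer (B ω))
    (hAB.comp houter houter) (fun p ↦ (hA p.1).integrable_mul (hA p.2))
    (fun p ↦ (hB p.1).integrable_mul (hB p.2))).trans ?_
  simp only [hmean, Fintype.sum_prod_type, Matrix.trace, Matrix.diag, Matrix.mul_apply,
    (isSymm_secondMomentMatrix A μ).apply]
  rfl

end SecondMoment

end ProbabilityTheory

/-- Second moment of `h = (X − Y)ᵀ(X′ − Y′)` for mutually independent `X, X′ ~ P`,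
`Y, Y′ ~ Q`: `E[h²] = tr((2Σ + δδᵀ)²)`, and consequently
`Var(h) = tr((2Σ + δδᵀ)²) − ‖δ‖⁴`. -/
theorem h_statistic_second_moment
    (d : ℕ) (Ω : Type) [MeasurableSpace Ω] (μ : Measure Ω) [IsProbabilityMeasure μ]
    (X X' Y Y' : Ω → Fin d → ℝ)
    (hmeas : ∀ W ∈ [X, X', Y, Y'], Measurable W)
    (hindep : iIndepFun ![X, Y, X', Y'] μ)
    (hXX' : IdentDistrib X X' μ μ) (hYY' : IdentDistrib Y Y' μ μ)
    (hL2 : ∀ W ∈ [X, X', Y, Y'], ∀ j, MemLp (fun ω => W ω j) 2 μ)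
    (μ₁ μ₂ : Fin d → ℝ)
    (hμ₁ : ∀ j, μ₁ j = ∫ ω, X ω j ∂μ) (hμ₂ : ∀ j, μ₂ j = ∫ ω, Y ω j ∂μ)
    (S₁ S₂ S : Matrix (Fin d) (Fin d) ℝ)
    (hS₁ : ∀ j k, S₁ j k = ∫ ω, (X ω j - μ₁ j) * (X ω k - μ₁ k) ∂μ)
    (hS₂ : ∀ j k, S₂ j k = ∫ ω, (Y ω j - μ₂ j) * (Y ω k - μ₂ k) ∂μ)
    (hS : S = (1 / 2 : ℝ) • (S₁ + S₂))
    (δ : Fin d → ℝ) (hδ : δ = fun j => μ₁ j - μ₂ j) :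
    (∫ ω, (∑ j, (X ω j - Y ω j) * (X' ω j - Y' ω j)) ^ 2 ∂μ) =
      Matrix.trace (((2 : ℝ) • S + Matrix.vecMulVec δ δ) *
        ((2 : ℝ) • S + Matrix.vecMulVec δ δ)) ∧
    (∫ ω, (∑ j, (X ω j - Y ω j) * (X' ω j - Y' ω j)) ^ 2 ∂μ) -
        (∫ ω, ∑ j, (X ω j - Y ω j) * (X' ω j - Y' ω j) ∂μ) ^ 2 =
      Matrix.trace (((2 : ℝ) • S + Matrix.vecMulVec δ δ) *
        ((2 : ℝ) • S + Matrix.vecMulVec δ δ)) - (∑ j, δ j ^ 2) ^ 2 := by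
  have hmeas_fin (i : Fin 4) : Measurable (![X, Y, X', Y'] i) := by
    fin_cases i <;> exact hmeas _ (by simp)
  have L2X := hL2 X (by simp)
  have L2Y := hL2 Y (by simp)
  have L2X' := hL2 X' (by simp)
  have L2Y' := hL2 Y' (by simp)
  have hXY : X ⟂ᵢ[μ] Y := hindep.indepFun (show (0 : Fin 4) ≠ 1 by decide)
  obtain ⟨hAB, hident⟩ := hindep.indepFun_and_identDistrib_sub hmeas_fin hXX' hYY'
  have hM : secondMomentMatrix (fun ω j ↦ X ω j - Y ω j) μ =
      (2 : ℝ) • S + Matrix.vecMulVec δ δ := by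
    ext j k
    rw [secondMomentMatrix_sub_apply hXY L2X L2Y]
    simp only [hS, hS₁, hS₂, hδ, hμ₁, hμ₂, Matrix.add_apply, Matrix.smul_apply,
      Matrix.vecMulVec_apply, smul_eq_mul, covariance]
    ring
  have hmean (j : Fin d) : ∫ ω, X ω j - Y ω j ∂μ = δ j := by
    rw [integral_sub ((L2X j).integrable one_le_two) ((L2Y j).integrable one_le_two)]
    simp only [hδ, hμ₁, hμ₂]
  have hmean' (j : Fin d) : ∫ ω, X' ω j - Y' ω j ∂μ = δ j :=
    (hident.comp (measurable_pi_apply j)).integral_eq ▸ hmean j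
  rw [integral_sq_sum_mul_of_identDistrib hAB hident fun j ↦ (L2X j).sub (L2Y j),
    integral_sum_mul_of_indepFun hAB (fun j ↦ ((L2X j).sub (L2Y j)).integrable one_le_two)
      (fun j ↦ ((L2X' j).sub (L2Y' j)).integrable one_le_two), hM]
  simp only [hmean, hmean', sq, and_self]
end

section
/- Fix any ξ ∈ (0,1) and define τ₀(ξ) = min{ s ∈ ℕ : s·V₀ ≥ ((1+√(1/3))²/(e−2))·ln(4/ξ) }. Then with probability at least 1 − ξ/2, simultaneously for all n < τ₀(ξ), |Tₙ| ≤ 2(1+√(1/3))·ln(4/ξ). -/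
/-!
For `0 ≤ λ ≤ 1` the process `k ↦ exp (λ T_{k+1})` is a nonnegative submartingale, because each
new factor `exp (λ hᵢ)` is independent of the past and has mean at least `1`. Doob's maximal
inequality therefore bounds `P(max_{k ≤ N} T_k ≥ a)` by `e^{-λ a} E[e^{λ T_N}]`, and the series
bound `eˣ ≤ 1 + x + (e - 2) x²` on `[-1, 1]` gives `E[e^{λ hᵢ}] ≤ exp ((e - 2) λ² V₀)`.
Before `τ₀` we have `N V₀ < (1 + √(1/3))² L / (e - 2)` with `L = ln (4 / ξ)`; with
`λ = 1 / (1 + √(1/3))` and `a = 2 (1 + √(1/3)) L` the exponent is at most `L - 2 L = -L`,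
so each of the two one-sided tails has probability at most `ξ / 4`.
-/

open MeasureTheory ProbabilityTheory
open Finset Real
open scoped ENNReal NNReal

lemma Real.hasSum_exp_sub_one_sub (x : ℝ) :
    HasSum (fun n : ℕ => x ^ (n + 2) / (n + 2).factorial) (exp x - 1 - x) := by
  have := (hasSum_nat_add_iff' 2).2 (NormedSpace.expSeries_div_hasSum_exp x)
  simpa [sum_range_succ, ← exp_eq_exp_ℝ, sub_sub] using this

lemma Real.exp_le_one_add_add_exp_one_sub_two_mul_sq {x : ℝ} (hx : |x| ≤ 1) :
    exp x ≤ 1 + x + (exp 1 - 2) * x ^ 2 := by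
  have hone : HasSum (fun n : ℕ => x ^ 2 * (1 / (n + 2).factorial)) (x ^ 2 * (exp 1 - 2)) := by
    simpa [sub_sub, one_add_one_eq_two] using (hasSum_exp_sub_one_sub 1).mul_left (x ^ 2)
  have := hasSum_le (fun n => ?_) (hasSum_exp_sub_one_sub x) hone
  · linarith
  have hxn : x ^ n ≤ 1 :=
    (le_abs_self _).trans ((abs_pow x n).trans_le (pow_le_one₀ (abs_nonneg x) hx))
  rw [pow_add, mul_one_div]
  gcongr
  exact mul_le_of_le_one_left (sq_nonneg x) hxn

lemma Nat.cast_sInf_sub_one_mul_lt {c V : ℝ} (hc : 0 < c) :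
    ((sInf {s : ℕ | c ≤ s * V} - 1 : ℕ) : ℝ) * V < c := by
  by_contra! h
  have hτ : sInf {s : ℕ | c ≤ s * V} = 0 := by
    have := Nat.sInf_le (s := {s : ℕ | c ≤ s * V}) h
    omega
  rw [hτ, Nat.zero_sub, Nat.cast_zero, zero_mul] at h
  linarith

lemma MeasureTheory.ofReal_one_sub_le_measure {Ω : Type*} [MeasurableSpace Ω] {μ : Measure Ω}
    [IsProbabilityMeasure μ] {s : Set Ω} {ε : ℝ} (hε : 0 ≤ ε) (h : μ sᶜ ≤ ENNReal.ofReal ε) :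
    ENNReal.ofReal (1 - ε) ≤ μ s := by
  rw [ENNReal.ofReal_sub _ hε, ENNReal.ofReal_one, tsub_le_iff_right]
  calc 1 = μ (s ∪ sᶜ) := by rw [Set.union_compl_self, measure_univ]
    _ ≤ μ s + μ sᶜ := measure_union_le _ _
    _ ≤ μ s + ENNReal.ofReal ε := by gcongr

namespace ProbabilityTheory

variable {Ω : Type*} [MeasurableSpace Ω] {μ : Measure Ω} [IsProbabilityMeasure μ]

lemma one_le_mgf_of_integral_eq_zero {X : Ω → ℝ} {t : ℝ} (hX : Integrable X μ)
    (hmean : μ[X] = 0) (hexp : Integrable (fun ω => exp (t * X ω)) μ) :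
    1 ≤ mgf X μ t := by
  calc (1 : ℝ) = ∫ ω, (1 + t * X ω) ∂μ := by
        rw [integral_add (integrable_const 1) (hX.const_mul t), integral_const_mul, hmean]
        simp
    _ ≤ mgf X μ t :=
        integral_mono ((integrable_const 1).add (hX.const_mul t)) hexp
          fun ω => by linarith [add_one_le_exp (t * X ω)]

lemma mgf_le_exp_mul_sq {X : Ω → ℝ} (hX : AEMeasurable X μ) (hbdd : ∀ᵐ ω ∂μ, |X ω| ≤ 1)
    (hmean : μ[X] = 0) {t : ℝ} (ht : |t| ≤ 1) :
    mgf X μ t ≤ exp ((exp 1 - 2) * t ^ 2 * ∫ ω, X ω ^ 2 ∂μ) := by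
  have hXint : Integrable X μ := .of_bound hX.aestronglyMeasurable 1 hbdd
  have hsqint : Integrable (fun ω => X ω ^ 2) μ :=
    .of_bound (hX.pow_const 2).aestronglyMeasurable 1 (by
      filter_upwards [hbdd] with ω hω
      simpa [abs_le] using hω)
  have hlin : Integrable (fun ω => 1 + t * X ω) μ := (integrable_const 1).add (hXint.const_mul t)
  calc mgf X μ t ≤ ∫ ω, (1 + t * X ω + (exp 1 - 2) * t ^ 2 * X ω ^ 2) ∂μ := by
        refine integral_mono_ae (integrable_exp_mul_of_mem_Icc hX (hbdd.mono fun ω => abs_le.1))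
          (hlin.add (hsqint.const_mul _)) ?_
        filter_upwards [hbdd] with ω hω
        have htX : |t * X ω| ≤ 1 := abs_mul t (X ω) ▸ mul_le_one₀ ht (abs_nonneg _) hω
        linarith [exp_le_one_add_add_exp_one_sub_two_mul_sq htX]
    _ = 1 + (exp 1 - 2) * t ^ 2 * ∫ ω, X ω ^ 2 ∂μ := by
        rw [integral_add hlin (hsqint.const_mul _), integral_add (integrable_const 1)
          (hXint.const_mul t), integral_const_mul, integral_const_mul, hmean]
        simp
    _ ≤ exp ((exp 1 - 2) * t ^ 2 * ∫ ω, X ω ^ 2 ∂μ) := by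
        linarith [add_one_le_exp ((exp 1 - 2) * t ^ 2 * ∫ ω, X ω ^ 2 ∂μ)]

section PartialSums

variable {X : ℕ → Ω → ℝ}

/-- The sum is shifted by one so that `X (k + 1)` is independent of the `k`-th σ-algebra of the
natural filtration. -/
lemma submartingale_exp_mul_sum_range_succ (hmeas : ∀ i, Measurable (X i))
    (hindep : iIndepFun X μ) (hint : ∀ i, Integrable (X i) μ) (hmean : ∀ i, μ[X i] = 0) {t : ℝ}
    (hexp : ∀ i, Integrable (fun ω => exp (t * X i ω)) μ) :
    Submartingale (fun k ω => exp (t * ∑ i ∈ range (k + 1), X i ω))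
      (Filtration.natural X fun i => (hmeas i).stronglyMeasurable) μ := by
  set 𝒢 := Filtration.natural X fun i => (hmeas i).stronglyMeasurable
  have hadapted : StronglyAdapted 𝒢 fun k ω => exp (t * ∑ i ∈ range (k + 1), X i ω) := by
    intro k
    refine (((Finset.measurable_sum _ fun i hi => ?_).const_mul t).exp).stronglyMeasurable
    exact ((Filtration.stronglyAdapted_natural _ i).measurable).mono
      (𝒢.mono (Nat.lt_succ_iff.1 (mem_range.1 hi))) le_rfl
  have hsum_int : ∀ k, Integrable (fun ω => exp (t * ∑ i ∈ range k, X i ω)) μ := fun k => by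
    simpa only [Finset.sum_apply] using
      hindep.integrable_exp_mul_sum hmeas (fun i _ => hexp i) (s := range k)
  refine submartingale_nat hadapted (fun k => hsum_int (k + 1)) fun k => ?_
  have hsplit : (fun ω => exp (t * ∑ i ∈ range (k + 1 + 1), X i ω)) =
      (fun ω => exp (t * ∑ i ∈ range (k + 1), X i ω)) * fun ω => exp (t * X (k + 1) ω) := by
    funext ω
    rw [sum_range_succ _ (k + 1), mul_add, exp_add, Pi.mul_apply]
  have hpull := condExp_mul_of_stronglyMeasurable_left (hadapted k)
    (hsplit ▸ hsum_int (k + 1 + 1)) (hexp (k + 1))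
  have hindep_step : μ[fun ω => exp (t * X (k + 1) ω) | 𝒢 k] =ᵐ[μ]
      fun _ => mgf (X (k + 1)) μ t :=
    condExp_indep_eq (hmeas (k + 1)).comap_le (𝒢.le k)
      (((Measurable.of_comap_le le_rfl).const_mul t).exp.stronglyMeasurable)
      (hindep.indep_comap_natural_of_lt _ (Nat.lt_succ_self k))
  filter_upwards [hpull, hindep_step] with ω h1 h2
  rw [hsplit, h1, Pi.mul_apply, h2]
  exact le_mul_of_one_le_right (exp_nonneg _)
    (one_le_mgf_of_integral_eq_zero (hint _) (hmean _) (hexp _))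

lemma measure_exists_le_sum_range_succ_le (hmeas : ∀ i, Measurable (X i))
    (hindep : iIndepFun X μ) (hint : ∀ i, Integrable (X i) μ) (hmean : ∀ i, μ[X i] = 0) {t : ℝ}
    (hexp : ∀ i, Integrable (fun ω => exp (t * X i ω)) μ)
    (ht : 0 ≤ t) (a : ℝ) (n : ℕ) :
    μ {ω | ∃ k ≤ n, a ≤ ∑ i ∈ range (k + 1), X i ω} ≤
      ENNReal.ofReal (exp (-(t * a)) * mgf (∑ i ∈ range (n + 1), X i) μ t) := by
  have hsub := submartingale_exp_mul_sum_range_succ hmeas hindep hint hmean hexp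
  set f := fun k ω => exp (t * ∑ i ∈ range (k + 1), X i ω)
  set ε : ℝ≥0 := ⟨exp (t * a), (exp_pos _).le⟩
  set E := {ω | (ε : ℝ) ≤ (range (n + 1)).sup' nonempty_range_add_one fun k => f k ω}
  have hsubset : {ω | ∃ k ≤ n, a ≤ ∑ i ∈ range (k + 1), X i ω} ⊆ E := by
    rintro ω ⟨k, hk, hak⟩
    show (ε : ℝ) ≤ (range (n + 1)).sup' nonempty_range_add_one fun k => f k ω
    exact (le_sup'_iff _).2 ⟨k, mem_range.2 (Nat.lt_succ_of_le hk),
      exp_le_exp.2 (mul_le_mul_of_nonneg_left hak ht)⟩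
  have hdoob : (ε : ℝ≥0∞) * μ E ≤ ENNReal.ofReal (mgf (∑ i ∈ range (n + 1), X i) μ t) := by
    refine (maximal_ineq hsub (fun k ω => (exp_pos _).le) n).trans (ENNReal.ofReal_le_ofReal ?_)
    simpa only [mgf, Finset.sum_apply] using
      setIntegral_le_integral (hsub.integrable n) (.of_forall fun ω => (exp_pos _).le)
  have hε : ENNReal.ofReal (exp (-(t * a))) * ε = 1 := by
    rw [← ENNReal.ofReal_coe_nnreal, ← ENNReal.ofReal_mul (exp_pos _).le]
    rw [show (ε : ℝ) = exp (t * a) from rfl, ← exp_add, neg_add_cancel, exp_zero,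
      ENNReal.ofReal_one]
  calc μ {ω | ∃ k ≤ n, a ≤ ∑ i ∈ range (k + 1), X i ω}
      ≤ ENNReal.ofReal (exp (-(t * a))) * (ε * μ E) := by
        rw [← mul_assoc, hε, one_mul]
        exact measure_mono hsubset
    _ ≤ ENNReal.ofReal (exp (-(t * a)) * mgf (∑ i ∈ range (n + 1), X i) μ t) := by
        rw [ENNReal.ofReal_mul (exp_pos _).le]
        gcongr

theorem measure_exists_le_sum_range_le (hmeas : ∀ i, Measurable (X i))
    (hindep : iIndepFun X μ) (hbdd : ∀ i, ∀ᵐ ω ∂μ, |X i ω| ≤ 1) (hmean : ∀ i, μ[X i] = 0)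
    {V : ℝ} (hvar : ∀ i, ∫ ω, X i ω ^ 2 ∂μ ≤ V) {t : ℝ} (ht₀ : 0 ≤ t) (ht₁ : t ≤ 1)
    {a : ℝ} (ha : 0 < a) (N : ℕ) :
    μ {ω | ∃ k ≤ N, a ≤ ∑ i ∈ range k, X i ω} ≤
      ENNReal.ofReal (exp ((exp 1 - 2) * t ^ 2 * N * V - t * a)) := by
  cases N with
  | zero =>
    refine le_of_eq_of_le (measure_eq_zero_iff_ae_notMem.2 (.of_forall ?_)) zero_le
    rintro ω ⟨k, hk, hak⟩
    exact absurd hak (by simpa [Nat.le_zero.1 hk] using ha)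
  | succ n =>
    have hint i : Integrable (X i) μ := .of_bound (hmeas i).aestronglyMeasurable 1 (hbdd i)
    have hexp i : Integrable (fun ω => exp (t * X i ω)) μ :=
      integrable_exp_mul_of_mem_Icc (hmeas i).aemeasurable ((hbdd i).mono fun ω => abs_le.1)
    have hmgf i : mgf (X i) μ t ≤ exp ((exp 1 - 2) * t ^ 2 * V) := by
      refine (mgf_le_exp_mul_sq (hmeas i).aemeasurable (hbdd i) (hmean i)
        (abs_le.2 ⟨by linarith, ht₁⟩)).trans (exp_le_exp.2 ?_)
      have : 0 ≤ exp 1 - 2 := by linarith [add_one_le_exp 1]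
      gcongr
      exact hvar i
    calc μ {ω | ∃ k ≤ n + 1, a ≤ ∑ i ∈ range k, X i ω}
        ≤ μ {ω | ∃ k ≤ n, a ≤ ∑ i ∈ range (k + 1), X i ω} := by
          refine measure_mono fun ω ⟨k, hk, hak⟩ => ?_
          cases k with
          | zero => exact absurd hak (by simpa using ha)
          | succ k => exact ⟨k, by omega, hak⟩
      _ ≤ ENNReal.ofReal (exp (-(t * a)) * mgf (∑ i ∈ range (n + 1), X i) μ t) :=
          measure_exists_le_sum_range_succ_le hmeas hindep hint hmean hexp ht₀ a n
      _ ≤ ENNReal.ofReal (exp ((exp 1 - 2) * t ^ 2 * ↑(n + 1) * V - t * a)) := by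
          refine ENNReal.ofReal_le_ofReal ?_
          rw [hindep.mgf_sum hmeas]
          calc exp (-(t * a)) * ∏ i ∈ range (n + 1), mgf (X i) μ t
              ≤ exp (-(t * a)) * ∏ _i ∈ range (n + 1), exp ((exp 1 - 2) * t ^ 2 * V) := by
                gcongr with i
                exacts [fun i _ => mgf_nonneg, hmgf i]
            _ = exp ((exp 1 - 2) * t ^ 2 * ↑(n + 1) * V - t * a) := by
                rw [prod_const, card_range, ← exp_nat_mul, ← exp_add]
                ring_nf

theorem measure_exists_le_abs_sum_range_le (hmeas : ∀ i, Measurable (X i))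
    (hindep : iIndepFun X μ) (hbdd : ∀ i, ∀ᵐ ω ∂μ, |X i ω| ≤ 1) (hmean : ∀ i, μ[X i] = 0)
    {V : ℝ} (hvar : ∀ i, ∫ ω, X i ω ^ 2 ∂μ ≤ V) {t : ℝ} (ht₀ : 0 ≤ t) (ht₁ : t ≤ 1)
    {a : ℝ} (ha : 0 < a) (N : ℕ) :
    μ {ω | ∃ k ≤ N, a ≤ |∑ i ∈ range k, X i ω|} ≤
      2 * ENNReal.ofReal (exp ((exp 1 - 2) * t ^ 2 * N * V - t * a)) := by
  have hneg := measure_exists_le_sum_range_le (X := fun i ω => -X i ω) (fun i => (hmeas i).neg)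
    (hindep.comp (fun _ x => -x) fun _ => measurable_neg)
    (by simpa only [abs_neg] using hbdd) (fun i => by rw [integral_neg, hmean, neg_zero])
    (by simpa only [neg_sq] using hvar) ht₀ ht₁ ha N
  calc μ {ω | ∃ k ≤ N, a ≤ |∑ i ∈ range k, X i ω|}
      ≤ μ ({ω | ∃ k ≤ N, a ≤ ∑ i ∈ range k, X i ω} ∪
          {ω | ∃ k ≤ N, a ≤ ∑ i ∈ range k, -X i ω}) := by
        refine measure_mono fun ω ⟨k, hk, hak⟩ => ?_
        rcases le_abs'.1 hak with hneg | hpos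
        · exact Or.inr ⟨k, hk, by rw [sum_neg_distrib]; linarith⟩
        · exact Or.inl ⟨k, hk, hpos⟩
    _ ≤ _ := (measure_union_le _ _).trans (by
        rw [two_mul]
        exact add_le_add (measure_exists_le_sum_range_le hmeas hindep hbdd hmean hvar ht₀ ht₁ ha N)
          hneg)

theorem measure_exists_le_abs_sum_range_le_exp_neg (hmeas : ∀ i, Measurable (X i))
    (hindep : iIndepFun X μ) (hbdd : ∀ i, ∀ᵐ ω ∂μ, |X i ω| ≤ 1) (hmean : ∀ i, μ[X i] = 0)
    {V : ℝ} (hvar : ∀ i, ∫ ω, X i ω ^ 2 ∂μ ≤ V) {r L : ℝ} (hr : 1 ≤ r) (hL : 0 < L) {N : ℕ}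
    (hN : N * V < r ^ 2 / (exp 1 - 2) * L) :
    μ {ω | ∃ k ≤ N, 2 * r * L ≤ |∑ i ∈ range k, X i ω|} ≤ 2 * ENNReal.ofReal (exp (-L)) := by
  have he : 0 < exp 1 - 2 := by linarith [exp_one_gt_d9]
  have hr₀ : 0 < r := by positivity
  refine (measure_exists_le_abs_sum_range_le hmeas hindep hbdd hmean hvar (t := 1 / r)
    (by positivity) (div_le_one_of_le₀ hr hr₀.le) (by positivity) N).trans ?_
  gcongr
  rw [div_mul_eq_mul_div, lt_div_iff₀' he] at hN
  have : (exp 1 - 2) * (N * V) / r ^ 2 ≤ L := (div_le_iff₀ (by positivity)).2 (by linarith)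
  calc _ = (exp 1 - 2) * (N * V) / r ^ 2 - 2 * L := by field_simp
    _ ≤ -L := by linarith

end PartialSums

end ProbabilityTheory

/-- Balsubramani (2015), Theorem 16: for i.i.d. mean-zero increments `hᵢ` with
`|hᵢ| ≤ 1` a.s. and `V₀ = E[hᵢ²]`, letting
`τ₀(ξ) = min{s : s V₀ ≥ ((1+√(1/3))²/(e−2)) ln(4/ξ)}`, with probability at least
`1 − ξ/2`, simultaneously for all `n < τ₀(ξ)`, `|Tₙ| ≤ 2(1+√(1/3)) ln(4/ξ)`. -/
theorem initial_time_bound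
    (Ω : Type) [MeasurableSpace Ω] (μ : Measure Ω) [IsProbabilityMeasure μ]
    (h : ℕ → Ω → ℝ)
    (hmeas : ∀ i, Measurable (h i))
    (hindep : iIndepFun h μ)
    (hid : ∀ i, IdentDistrib (h i) (h 0) μ μ)
    (hbdd : ∀ i, ∀ᵐ ω ∂μ, |h i ω| ≤ 1)
    (hmean : ∀ i, ∫ ω, h i ω ∂μ = 0)
    (V₀ : ℝ) (hV₀ : V₀ = ∫ ω, (h 0 ω) ^ 2 ∂μ)
    (ξ : ℝ) (hξ₀ : 0 < ξ) (hξ₁ : ξ < 1) :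
    ENNReal.ofReal (1 - ξ / 2) ≤
      μ {ω | ∀ n : ℕ,
        n < sInf {s : ℕ | (1 + Real.sqrt (1 / 3)) ^ 2 / (Real.exp 1 - 2) * Real.log (4 / ξ)
            ≤ s * V₀} →
        |∑ i ∈ Finset.range n, h i ω| ≤ 2 * (1 + Real.sqrt (1 / 3)) * Real.log (4 / ξ)} := by
  set r := 1 + √(1 / 3)
  set L := log (4 / ξ)
  set τ₀ := sInf {s : ℕ | r ^ 2 / (exp 1 - 2) * L ≤ s * V₀}
  have hL : 0 < L := log_pos (by rw [lt_div_iff₀ hξ₀]; linarith)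
  have he : 0 < exp 1 - 2 := by linarith [exp_one_gt_d9]
  have hvar i : ∫ ω, h i ω ^ 2 ∂μ ≤ V₀ :=
    (hV₀ ▸ ((hid i).comp (measurable_id.pow_const 2)).integral_eq).le
  refine ofReal_one_sub_le_measure (by positivity) ?_
  calc μ {ω | ∀ n < τ₀, |∑ i ∈ range n, h i ω| ≤ 2 * r * L}ᶜ
      ≤ μ {ω | ∃ k ≤ τ₀ - 1, 2 * r * L ≤ |∑ i ∈ range k, h i ω|} := by
        refine measure_mono fun ω hω => ?_
        obtain ⟨n, hn, hbig⟩ : ∃ n < τ₀, 2 * r * L < |∑ i ∈ range n, h i ω| := by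
          simpa using hω
        exact ⟨n, by omega, hbig.le⟩
    _ ≤ 2 * ENNReal.ofReal (exp (-L)) :=
        measure_exists_le_abs_sum_range_le_exp_neg hmeas hindep hbdd hmean hvar
          (le_add_of_nonneg_right (sqrt_nonneg _)) hL
          (Nat.cast_sInf_sub_one_mul_lt (mul_pos (div_pos (by positivity) he) hL))
    _ = ENNReal.ofReal (ξ / 2) := by
        rw [exp_neg, exp_log (by positivity), inv_div, ← ENNReal.ofReal_ofNat 2,
          ← ENNReal.ofReal_mul (by norm_num)]
        ring_nf
end

section
/- There exists an absolute constant C₃ > 0 such that for any ξ ∈ (0,1), with probability at least 1 − ξ, simultaneously for all n ≥ 1, the cumulative variance process satisfies n·V₀ ≤ C₃·(V̂ₙ + C₀(ξ)). -/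
open MeasureTheory ProbabilityTheory

/-- `C₀(ξ) = 3(e−2)e² + 2(1+√(1/3)) ln(8/ξ)`. -/
noncomputable def Czero (ξ : ℝ) : ℝ :=
  3 * (Real.exp 1 - 2) * (Real.exp 1) ^ 2 + 2 * (1 + Real.sqrt (1 / 3)) * Real.log (8 / ξ)

/-!
The squares `Xᵢ = hᵢ²` take values in `[0, 1]` and have mean `V₀`. Since `exp (-x) ≤ 1 - x / 2`
on `[0, 1]`, `E[exp (-Xᵢ)] ≤ exp (-V₀ / 2)`, and independence gives the multiplicative Chernoff
bound `P(X₀ + ⋯ + X_{m-1} ≤ t) ≤ exp (t - m V₀ / 2)`. A union bound over all `n` is not uniform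
in `V₀`, so we peel dyadically: a violation of `n V₀ ≤ 8 (V̂ₙ + C)` forces
`4 (V̂_{2ᵏ} + C) < 2ᵏ V₀` for `k = ⌊log₂ n⌋`. This event is empty while `2ᵏ V₀ / 4 ≤ C`, and
afterwards has probability at most `exp (-2ᵏ V₀ / 4)`, so the total is a geometric series in
`exp (-C)` bounded by `2 exp (-C) ≤ ξ`.
-/

open Real Finset
open scoped ENNReal

lemma Real.exp_neg_le_one_sub_half_mul {x : ℝ} (hx : x ∈ Set.Icc (0 : ℝ) 1) :
    exp (-x) ≤ 1 - x / 2 := by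
  obtain ⟨hx0, hx1⟩ := hx
  have hconv := convexOn_exp.2 (Set.mem_univ (0 : ℝ)) (Set.mem_univ (-1 : ℝ))
    (sub_nonneg.2 hx1) hx0 (sub_add_cancel 1 x)
  simp only [smul_eq_mul, mul_zero, mul_neg_one, zero_add, exp_zero, mul_one] at hconv
  have he : exp (-1) ≤ 1 / 2 := by
    rw [exp_neg, inv_le_comm₀ (exp_pos 1) (by norm_num)]
    linarith [add_one_le_exp (1 : ℝ)]
  nlinarith

/-- Only the indices from the first `k₀` with `c < 2 ^ k₀ * a` on contribute, and for them
`2 ^ (k₀ + j) * a ≥ (j + 1) * c`, so the sum is dominated by a geometric series of ratio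
`exp (-c) ≤ 1 / 2`. -/
lemma tsum_le_of_le_exp_neg_two_pow_mul {f : ℕ → ℝ≥0∞} {a c : ℝ} (hc : log 2 ≤ c)
    (hf₀ : ∀ k, 2 ^ k * a ≤ c → f k = 0)
    (hf : ∀ k, f k ≤ ENNReal.ofReal (exp (-(2 ^ k * a)))) :
    ∑' k, f k ≤ ENNReal.ofReal (2 * exp (-c)) := by
  classical
  by_cases hex : ∃ k, c < 2 ^ k * a
  swap
  · push Not at hex
    simp [hf₀ _ (hex _)]
  set k₀ := Nat.find hex
  have hk₀ : c < 2 ^ k₀ * a := Nat.find_spec hex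
  have hc0 : 0 ≤ c := (log_nonneg one_le_two).trans hc
  set r := exp (-c)
  have hr : ENNReal.ofReal r ≤ 2⁻¹ := by
    rw [← ENNReal.ofReal_ofNat 2, ← ENNReal.ofReal_inv_of_pos two_pos]
    refine ENNReal.ofReal_le_ofReal ?_
    calc exp (-c) ≤ exp (-log 2) := exp_le_exp.2 (neg_le_neg hc)
      _ = 2⁻¹ := by rw [exp_neg, exp_log two_pos]
  have hinv : (1 - ENNReal.ofReal r)⁻¹ ≤ 2 := by
    rw [ENNReal.inv_le_iff_inv_le]
    refine ENNReal.le_sub_of_add_le_left ENNReal.ofReal_ne_top ?_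
    calc ENNReal.ofReal r + 2⁻¹ ≤ 2⁻¹ + 2⁻¹ := by gcongr
      _ = 1 := ENNReal.inv_two_add_inv_two
  have hterm : ∀ j, f (j + k₀) ≤ ENNReal.ofReal r ^ (j + 1) := by
    intro j
    refine (hf _).trans ?_
    rw [← ENNReal.ofReal_pow (exp_pos _).le, ← exp_nat_mul]
    refine ENNReal.ofReal_le_ofReal (exp_le_exp.2 ?_)
    have hj : (j + 1 : ℝ) ≤ 2 ^ j := by exact_mod_cast Nat.lt_two_pow_self
    rw [pow_add]
    push_cast
    nlinarith
  calc ∑' k, f k = ∑' j, f (j + k₀) := by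
        rw [← ENNReal.summable.sum_add_tsum_nat_add',
          sum_eq_zero fun k hk => hf₀ k (not_lt.1 (Nat.find_min hex (mem_range.1 hk))),
          zero_add]
    _ ≤ ∑' j, ENNReal.ofReal r ^ (j + 1) := ENNReal.tsum_le_tsum hterm
    _ = ENNReal.ofReal r * (1 - ENNReal.ofReal r)⁻¹ := ENNReal.tsum_geometric_add_one _
    _ ≤ ENNReal.ofReal r * 2 := by gcongr
    _ = ENNReal.ofReal (2 * r) := by
        rw [mul_comm, ENNReal.ofReal_mul zero_le_two, ENNReal.ofReal_ofNat]

lemma exists_two_pow_sum_lt_of_sum_lt {x : ℕ → ℝ} (hx : ∀ i, 0 ≤ x i) {v c : ℝ} (hv : 0 ≤ v)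
    {n : ℕ} (hn : 1 ≤ n) (h : 8 * (∑ i ∈ range n, x i + c) < n * v) :
    ∃ k, 4 * (∑ i ∈ range (2 ^ k), x i + c) < 2 ^ k * v := by
  refine ⟨Nat.log 2 n, ?_⟩
  have hsum : ∑ i ∈ range (2 ^ Nat.log 2 n), x i ≤ ∑ i ∈ range n, x i :=
    sum_le_sum_of_subset_of_nonneg
      (range_subset_range.2 (Nat.pow_log_le_self 2 (Nat.one_le_iff_ne_zero.1 hn)))
      fun i _ _ => hx i
  have hlt : (n : ℝ) ≤ 2 * 2 ^ Nat.log 2 n := by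
    exact_mod_cast (Nat.lt_pow_succ_log_self one_lt_two n).le.trans_eq (pow_succ' 2 _)
  nlinarith

section Concentration

variable {Ω : Type*} [MeasurableSpace Ω] {μ : Measure Ω}

lemma mgf_neg_one_le_of_mem_Icc [IsProbabilityMeasure μ] {X : Ω → ℝ} (hX : AEMeasurable X μ)
    (hb : ∀ᵐ ω ∂μ, X ω ∈ Set.Icc (0 : ℝ) 1) :
    mgf X μ (-1) ≤ exp (-(μ[X] / 2)) := by
  have hXint : Integrable X μ := .of_mem_Icc 0 1 hX hb
  calc mgf X μ (-1) ≤ ∫ ω, (1 - X ω / 2) ∂μ := by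
        refine integral_mono_ae (integrable_exp_mul_of_mem_Icc hX hb)
          ((integrable_const 1).sub (hXint.div_const 2)) ?_
        filter_upwards [hb] with ω hω
        simpa only [neg_one_mul] using exp_neg_le_one_sub_half_mul hω
    _ = 1 - μ[X] / 2 := by
        rw [integral_sub (integrable_const 1) (hXint.div_const 2), integral_div]
        simp
    _ ≤ exp (-(μ[X] / 2)) := by linarith [add_one_le_exp (-(μ[X] / 2))]

lemma measure_sum_range_le_le_exp {X : ℕ → Ω → ℝ} {v : ℝ} (hX : ∀ i, AEMeasurable (X i) μ)
    (hind : iIndepFun X μ) (hb : ∀ i, ∀ᵐ ω ∂μ, X i ω ∈ Set.Icc (0 : ℝ) 1)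
    (hmean : ∀ i, μ[X i] = v) (m : ℕ) (t : ℝ) :
    μ {ω | ∑ i ∈ range m, X i ω ≤ t} ≤ ENNReal.ofReal (exp (t - m * v / 2)) := by
  have := hind.isProbabilityMeasure
  set S := ∑ i ∈ range m, X i
  have hS : AEMeasurable S μ := Finset.aemeasurable_sum _ fun i _ => hX i
  have hSb : ∀ᵐ ω ∂μ, S ω ∈ Set.Icc (0 : ℝ) m := by
    filter_upwards [ae_all_iff.2 hb] with ω hω
    simp only [S, Finset.sum_apply, Set.mem_Icc]
    exact ⟨sum_nonneg fun i _ => (hω i).1,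
      (sum_le_sum fun i _ => (hω i).2).trans_eq (by simp)⟩
  have hmgf : mgf S μ (-1) ≤ exp (-(v / 2)) ^ m := by
    rw [hind.mgf_sum₀ hX]
    refine (prod_le_prod (fun i _ => mgf_nonneg) fun i _ => ?_).trans_eq
      (by rw [prod_const, card_range])
    exact hmean i ▸ mgf_neg_one_le_of_mem_Icc (hX i) (hb i)
  have hreal : μ.real {ω | S ω ≤ t} ≤ exp (t - m * v / 2) :=
    calc μ.real {ω | S ω ≤ t}
        ≤ exp (-(-1) * t) * mgf S μ (-1) :=
          measure_le_le_exp_mul_mgf t (by norm_num) (integrable_exp_mul_of_mem_Icc hS hSb)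
      _ ≤ exp t * exp (-(v / 2)) ^ m := by
          rw [neg_neg, one_mul]
          exact mul_le_mul_of_nonneg_left hmgf (exp_pos t).le
      _ = exp (t - m * v / 2) := by
          rw [← exp_nat_mul, ← exp_add]; ring_nf
  simpa only [S, Finset.sum_apply, measureReal_def,
    ENNReal.ofReal_toReal (measure_ne_top μ _)] using ENNReal.ofReal_le_ofReal hreal

lemma measure_exists_sum_lt_le {X : ℕ → Ω → ℝ} {v c : ℝ} (hX : ∀ i, AEMeasurable (X i) μ)
    (hind : iIndepFun X μ) (hb : ∀ i, ∀ᵐ ω ∂μ, X i ω ∈ Set.Icc (0 : ℝ) 1)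
    (hmean : ∀ i, μ[X i] = v) (hc : log 2 ≤ c) :
    μ {ω | ∃ n, 1 ≤ n ∧ 8 * (∑ i ∈ range n, X i ω + c) < n * v} ≤
      ENNReal.ofReal (2 * exp (-c)) := by
  have := hind.isProbabilityMeasure
  have hc0 : 0 ≤ c := (log_nonneg one_le_two).trans hc
  have hv : 0 ≤ v :=
    hmean 0 ▸ integral_nonneg_of_ae (by filter_upwards [hb 0] with ω hω using hω.1)
  have hnonneg : ∀ᵐ ω ∂μ, ∀ i, 0 ≤ X i ω := by
    filter_upwards [ae_all_iff.2 hb] with ω hω i using (hω i).1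
  set A : ℕ → Set Ω := fun k => {ω | 4 * (∑ i ∈ range (2 ^ k), X i ω + c) < 2 ^ k * v}
  have hcover :
      {ω | ∃ n, 1 ≤ n ∧ 8 * (∑ i ∈ range n, X i ω + c) < n * v} ≤ᵐ[μ] ⋃ k, A k := by
    filter_upwards [hnonneg] with ω hω ⟨n, hn, hlt⟩
    exact Set.mem_iUnion.2 (exists_two_pow_sum_lt_of_sum_lt hω hv hn hlt)
  refine (measure_mono_ae hcover).trans <| (measure_iUnion_le A).trans <|
    tsum_le_of_le_exp_neg_two_pow_mul (a := v / 4) hc (fun k hk => ?_) (fun k => ?_)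
  · refine measure_eq_zero_iff_ae_notMem.2 ?_
    filter_upwards [hnonneg] with ω hω hA
    have : 0 ≤ ∑ i ∈ range (2 ^ k), X i ω := sum_nonneg fun i _ => hω i
    simp only [A, Set.mem_ofPred_eq] at hA
    linarith
  · have hsub : A k ⊆ {ω | ∑ i ∈ range (2 ^ k), X i ω ≤ 2 ^ k * v / 4 - c} := fun ω hω => by
      simp only [A, Set.mem_ofPred_eq] at hω ⊢
      linarith
    refine (measure_mono hsub).trans <|
      (measure_sum_range_le_le_exp hX hind hb hmean _ _).trans (ENNReal.ofReal_le_ofReal ?_)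
    refine exp_le_exp.2 ?_
    push_cast
    linarith

end Concentration

lemma log_two_div_le_Czero {ξ : ℝ} (hξ0 : 0 < ξ) (hξ1 : ξ ≤ 1) : log (2 / ξ) ≤ Czero ξ := by
  have he : 2 ≤ exp 1 := by linarith [add_one_le_exp (1 : ℝ)]
  have hlog : log (2 / ξ) ≤ log (8 / ξ) := log_le_log (by positivity) (by gcongr; norm_num)
  have hlog0 : 0 ≤ log (8 / ξ) := log_nonneg (by rw [le_div_iff₀ hξ0]; linarith)
  have hsqrt := sqrt_nonneg (1 / 3)
  unfold Czero
  nlinarith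

/-- There is an absolute constant `C₃ > 0` such that for i.i.d. increments `hᵢ` with
`|hᵢ| ≤ 1` a.s. and `V₀ = E[hᵢ²]`, for any `ξ ∈ (0,1)`, with probability at least `1 − ξ`,
simultaneously for all `n ≥ 1`, `n V₀ ≤ C₃ (V̂ₙ + C₀(ξ))` where `V̂ₙ = Σ_{i<n} hᵢ²`. -/
theorem variance_process_lower_bound :
    ∃ C₃ : ℝ, 0 < C₃ ∧
      ∀ (Ω : Type) [MeasurableSpace Ω] (μ : Measure Ω), IsProbabilityMeasure μ →
      ∀ (h : ℕ → Ω → ℝ),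
        (∀ i, Measurable (h i)) →
        iIndepFun h μ →
        (∀ i, IdentDistrib (h i) (h 0) μ μ) →
        (∀ i, ∀ᵐ ω ∂μ, |h i ω| ≤ 1) →
        ∀ (V₀ : ℝ), V₀ = ∫ ω, (h 0 ω) ^ 2 ∂μ →
        ∀ (ξ : ℝ), 0 < ξ → ξ < 1 →
        ENNReal.ofReal (1 - ξ) ≤
          μ {ω | ∀ n : ℕ, 1 ≤ n →
            n * V₀ ≤ C₃ * ((∑ i ∈ Finset.range n, (h i ω) ^ 2) + Czero ξ)} := by
  refine ⟨8, by norm_num, fun Ω _ μ _ h hm hind hid hb V₀ hV ξ hξ0 hξ1 => ?_⟩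
  have hC : log (2 / ξ) ≤ Czero ξ := log_two_div_le_Czero hξ0 hξ1.le
  have hbad := measure_exists_sum_lt_le (μ := μ) (X := fun i ω => h i ω ^ 2) (v := V₀)
    (fun i => ((hm i).pow_const 2).aemeasurable)
    (hind.comp (fun _ x => x ^ 2) fun _ => measurable_id.pow_const 2)
    (fun i => by
      filter_upwards [hb i] with ω hω using ⟨sq_nonneg _, (sq_le_one_iff_abs_le_one _).2 hω⟩)
    (fun i => hV ▸ ((hid i).comp (measurable_id.pow_const 2)).integral_eq)
    ((log_le_log two_pos (by rw [le_div_iff₀ hξ0]; linarith)).trans hC)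
  have hξ : 2 * exp (-Czero ξ) ≤ ξ :=
    calc 2 * exp (-Czero ξ) ≤ 2 * exp (-log (2 / ξ)) := by gcongr
      _ = ξ := by rw [exp_neg, exp_log (by positivity)]; field_simp
  set G := {ω | ∀ n : ℕ, 1 ≤ n → n * V₀ ≤ 8 * ((∑ i ∈ range n, (h i ω) ^ 2) + Czero ξ)}
  have hGc : μ Gᶜ ≤ ENNReal.ofReal ξ := by
    refine (measure_mono fun ω hω => ?_).trans (hbad.trans (ENNReal.ofReal_le_ofReal hξ))
    simpa [G] using hω
  rw [ENNReal.ofReal_sub 1 hξ0.le, ENNReal.ofReal_one, tsub_le_iff_right]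
  calc 1 = μ Set.univ := measure_univ.symm
    _ ≤ μ G + μ Gᶜ := measure_univ_le_add_compl G
    _ ≤ μ G + ENNReal.ofReal ξ := by gcongr
end

section
/- There exists an absolute constant K > 0 such that for any α ∈ (0,1), with probability at least 1 − α, simultaneously for all n ≥ K·ln(4/α), the simple random walk satisfies |Sₙ| ≤ √(K·n·ln(ln n / α)). -/
/-!
Split time into the dyadic blocks `2^j ≤ n < 2^(j+1)`. Since `exp (t Sₖ)` is a submartingale,
Doob's maximal inequality with the optimal `t` gives the maximal Hoeffding bound
`P(maxₖ≤m |Sₖ| ≥ ε) ≤ 2 exp(-ε²/2m)`. With `m = 2^(j+1)` and `ε² = 16·2^j·ln(ln 2^j / α)`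
the `j`-th block fails with probability `2 (α / (j ln 2))⁴`, and these probabilities sum to at most
`α` over `j ≥ 4`. The condition `n ≥ 16 ln(4/α)` forces `n ≥ 16`, i.e. `n` lies in a block with
`j ≥ 4`, and there `ε ≤ √(16 n ln(ln n / α))`. So `K = 16` works.
-/

open MeasureTheory ProbabilityTheory Real Finset
open scoped NNReal ENNReal

namespace MeasureTheory

variable {Ω : Type*} [m0 : MeasurableSpace Ω] {μ : Measure Ω}

theorem Submartingale.measure_exists_le_ge_le [IsFiniteMeasure μ] {f : ℕ → Ω → ℝ}
    {ℱ : Filtration ℕ m0} (hsub : Submartingale f ℱ μ) (hnonneg : 0 ≤ f) {r : ℝ} (hr : 0 < r)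
    (n : ℕ) :
    μ {ω | ∃ k ≤ n, r ≤ f k ω} ≤ ENNReal.ofReal (μ[f n] / r) := by
  have hset : {ω | ∃ k ≤ n, r ≤ f k ω}
      = {ω | (r.toNNReal : ℝ) ≤ (range (n + 1)).sup' nonempty_range_add_one fun k => f k ω} := by
    ext ω
    simp [Finset.le_sup'_iff, max_eq_left hr.le]
  have hdoob := (maximal_ineq hsub hnonneg (ε := r.toNNReal) n).trans
    (ENNReal.ofReal_le_ofReal (setIntegral_le_integral (hsub.integrable n)
      (Filter.Eventually.of_forall fun ω => hnonneg n ω)))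
  rw [hset, ENNReal.ofReal_div_of_pos hr, ENNReal.le_div_iff_mul_le (by simp [hr]) (by simp),
    mul_comm]
  simpa [ENNReal.ofReal] using hdoob

lemma measure_iUnion_le_ofReal_of_le_sub {s : ℕ → Set Ω} {u : ℕ → ℝ} (hu : Antitone u)
    (hu_nonneg : ∀ n, 0 ≤ u n)
    (hs : ∀ i, μ (s i) ≤ ENNReal.ofReal (u i - u (i + 1))) :
    μ (⋃ i, s i) ≤ ENNReal.ofReal (u 0) := by
  refine (measure_iUnion_le s).trans ?_
  rw [ENNReal.tsum_eq_iSup_nat]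
  refine iSup_le fun n => ?_
  calc ∑ i ∈ range n, μ (s i) ≤ ∑ i ∈ range n, ENNReal.ofReal (u i - u (i + 1)) :=
        sum_le_sum fun i _ => hs i
    _ = ENNReal.ofReal (u 0 - u n) := by
        rw [← ENNReal.ofReal_sum_of_nonneg fun i _ => sub_nonneg.2 (hu i.le_succ),
          sum_range_sub']
    _ ≤ ENNReal.ofReal (u 0) := ENNReal.ofReal_le_ofReal (by linarith [hu_nonneg n])

end MeasureTheory

namespace ProbabilityTheory

variable {Ω : Type*} [m0 : MeasurableSpace Ω] {μ : Measure Ω}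

section SubGaussian

variable [IsProbabilityMeasure μ] {X : Ω → ℝ} {c : ℝ≥0}

/-- `t ↦ exp (c t² / 2) - mgf X μ t` is nonnegative and vanishes at `0`, so its derivative
`-μ[X]` at `0` is zero. -/
lemma HasSubgaussianMGF.integral_eq_zero (h : HasSubgaussianMGF X c μ) : μ[X] = 0 := by
  have h0 : (0 : ℝ) ∈ interior (integrableExpSet X μ) := by simp [h.integrableExpSet_eq_univ]
  have hmin : IsLocalMin (fun t => exp (c * t ^ 2 / 2) - mgf X μ t) 0 :=
    Filter.Eventually.of_forall fun t => by simpa using h.mgf_le t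
  have hgauss : HasDerivAt (fun t : ℝ => exp (c * t ^ 2 / 2)) 0 0 := by
    simpa using (((hasDerivAt_pow 2 (0 : ℝ)).const_mul (c : ℝ)).div_const 2).exp
  have hderiv := hgauss.sub (hasDerivAt_mgf h0)
  simpa using hmin.hasDerivAt_eq_zero hderiv

lemma HasSubgaussianMGF.one_le_mgf (h : HasSubgaussianMGF X c μ) (t : ℝ) : 1 ≤ mgf X μ t :=
  calc 1 = ∫ ω, (1 + t * X ω) ∂μ := by
        rw [integral_add (integrable_const 1) (h.integrable.const_mul t), integral_const_mul,
          h.integral_eq_zero]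
        simp
    _ ≤ mgf X μ t := integral_mono ((integrable_const 1).add (h.integrable.const_mul t))
        (h.integrable_exp_mul t) fun ω => by simpa [add_comm] using add_one_le_exp (t * X ω)

end SubGaussian

section Filtration

variable {β : Type*} [MeasurableSpace β] {X : ℕ → Ω → β} (hX : ∀ i, Measurable (X i))

/-- The `n`-th σ-algebra is `σ(X₀, …, X_{n-1})`, so that `X n` is independent of it. -/
def strictNaturalFiltration : Filtration ℕ m0 where
  seq n := ⨆ i ∈ Set.Iio n, MeasurableSpace.comap (X i) inferInstance
  mono' _ _ hnm := biSup_mono fun _ hi => lt_of_lt_of_le hi hnm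
  le' _ := iSup₂_le fun i _ => (hX i).comap_le

lemma measurable_strictNaturalFiltration {i n : ℕ} (hin : i < n) :
    Measurable[strictNaturalFiltration hX n] (X i) :=
  Measurable.of_comap_le
    (le_iSup₂ (f := fun j (_ : j ∈ Set.Iio n) => MeasurableSpace.comap (X j) inferInstance) i hin)

lemma indep_comap_strictNaturalFiltration [IsProbabilityMeasure μ] (hind : iIndepFun X μ)
    (n : ℕ) :
    Indep (MeasurableSpace.comap (X n) inferInstance) (strictNaturalFiltration hX n) μ := by
  simpa [strictNaturalFiltration] using
    indep_iSup_of_disjoint (fun i => (hX i).comap_le) hind.iIndep (S := {n}) (T := Set.Iio n)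
      (by simp)

end Filtration

variable [IsProbabilityMeasure μ] {X : ℕ → Ω → ℝ}

/-- Each step multiplies `exp (t Sₙ)` by the independent factor `exp (t Xₙ)` of mean `≥ 1`. -/
theorem submartingale_exp_mul_sum_range (hX : ∀ i, Measurable (X i)) (hind : iIndepFun X μ)
    {t : ℝ} (hint : ∀ i, Integrable (fun ω => exp (t * X i ω)) μ)
    (hmgf : ∀ i, 1 ≤ mgf (X i) μ t) :
    Submartingale (fun n ω => exp (t * ∑ i ∈ range n, X i ω)) (strictNaturalFiltration hX) μ := by
  set ℱ := strictNaturalFiltration hX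
  have hadapted : ∀ n, StronglyMeasurable[ℱ n] fun ω => exp (t * ∑ i ∈ range n, X i ω) :=
    fun n => (Finset.measurable_sum _ fun i hi => measurable_strictNaturalFiltration hX
      (mem_range.1 hi)).const_mul t |>.exp.stronglyMeasurable
  have hint_sum : ∀ n, Integrable (fun ω => exp (t * ∑ i ∈ range n, X i ω)) μ := fun n => by
    simpa using hind.integrable_exp_mul_sum hX (s := range n) fun i _ => hint i
  refine submartingale_nat hadapted hint_sum fun n => ?_
  have hstep : (fun ω => exp (t * ∑ i ∈ range (n + 1), X i ω))
      = (fun ω => exp (t * ∑ i ∈ range n, X i ω)) * fun ω => exp (t * X n ω) := by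
    ext ω
    simp only [sum_range_succ, mul_add, exp_add, Pi.mul_apply]
  have hpull := condExp_mul_of_stronglyMeasurable_left (m := ℱ n) (hadapted n)
    (hstep ▸ hint_sum (n + 1)) (hint n)
  have hindep := condExp_indep_eq (hX n).comap_le (ℱ.le n)
    (((Measurable.of_comap_le le_rfl).const_mul t).exp.stronglyMeasurable)
    (indep_comap_strictNaturalFiltration hX hind n) (f := fun ω => exp (t * X n ω))
  rw [hstep]
  filter_upwards [hpull, hindep] with ω hpull hindep
  rw [hpull, Pi.mul_apply, hindep]
  exact le_mul_of_one_le_right (exp_pos _).le (hmgf n)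

/-- Doob's maximal inequality for `exp (t Sₖ)` with `t = ε / (n c)`. -/
theorem HasSubgaussianMGF.measure_exists_le_sum_range_ge_le (hX : ∀ i, Measurable (X i))
    (hind : iIndepFun X μ) {c : ℝ≥0} (hsub : ∀ i, HasSubgaussianMGF (X i) c μ) {ε : ℝ}
    (hε : 0 ≤ ε) (n : ℕ) :
    μ {ω | ∃ k ≤ n, ε ≤ ∑ i ∈ range k, X i ω} ≤ ENNReal.ofReal (exp (-ε ^ 2 / (2 * n * c))) := by
  rcases eq_or_lt_of_le (by positivity : (0 : ℝ) ≤ n * c) with hnc | hnc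
  · rw [mul_assoc, ← hnc]
    simpa using prob_le_one
  have hn : (n : ℝ) ≠ 0 := fun h => by simp [h] at hnc
  have hc : (c : ℝ) ≠ 0 := fun h => by simp [h] at hnc
  set t := ε / (n * c)
  have ht : 0 ≤ t := by positivity
  have hsubm := submartingale_exp_mul_sum_range hX hind (fun i => (hsub i).integrable_exp_mul t)
    fun i => (hsub i).one_le_mgf t
  have hmgf : μ[fun ω => exp (t * ∑ i ∈ range n, X i ω)] ≤ exp (n * c * t ^ 2 / 2) := by
    simpa [mgf, nsmul_eq_mul] using
      (HasSubgaussianMGF.sum_of_iIndepFun hind (s := range n) fun i _ => hsub i).mgf_le t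
  calc μ {ω | ∃ k ≤ n, ε ≤ ∑ i ∈ range k, X i ω}
      ≤ μ {ω | ∃ k ≤ n, exp (t * ε) ≤ exp (t * ∑ i ∈ range k, X i ω)} :=
        measure_mono fun ω ⟨k, hk, hkε⟩ => ⟨k, hk, exp_le_exp.2 (by gcongr)⟩
    _ ≤ ENNReal.ofReal (exp (n * c * t ^ 2 / 2) / exp (t * ε)) :=
        (hsubm.measure_exists_le_ge_le (fun _ _ => (exp_pos _).le) (exp_pos _) n).trans
          (ENNReal.ofReal_le_ofReal (by gcongr))
    _ = ENNReal.ofReal (exp (-ε ^ 2 / (2 * n * c))) := by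
        rw [← exp_sub]
        congr 2
        simp only [t]
        field_simp
        ring

theorem HasSubgaussianMGF.measure_exists_le_abs_sum_range_ge_le (hX : ∀ i, Measurable (X i))
    (hind : iIndepFun X μ) {c : ℝ≥0} (hsub : ∀ i, HasSubgaussianMGF (X i) c μ) {ε : ℝ}
    (hε : 0 ≤ ε) (n : ℕ) :
    μ {ω | ∃ k ≤ n, ε ≤ |∑ i ∈ range k, X i ω|}
      ≤ ENNReal.ofReal (2 * exp (-ε ^ 2 / (2 * n * c))) := by
  have hneg := measure_exists_le_sum_range_ge_le (X := fun i => -X i) (fun i => (hX i).neg)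
    (hind.comp (fun _ => Neg.neg) fun _ => measurable_neg) (fun i => (hsub i).neg) hε n
  have hpos := measure_exists_le_sum_range_ge_le hX hind hsub hε n
  calc μ {ω | ∃ k ≤ n, ε ≤ |∑ i ∈ range k, X i ω|}
      ≤ μ ({ω | ∃ k ≤ n, ε ≤ ∑ i ∈ range k, X i ω}
          ∪ {ω | ∃ k ≤ n, ε ≤ ∑ i ∈ range k, (fun i => -X i) i ω}) := by
        refine measure_mono fun ω ⟨k, hk, hkε⟩ => ?_
        rcases le_abs'.1 hkε with h | h
        · exact Or.inr ⟨k, hk, by simpa using le_neg_of_le_neg h⟩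
        · exact Or.inl ⟨k, hk, h⟩
    _ ≤ _ := (measure_union_le _ _).trans (add_le_add hpos hneg)
    _ = ENNReal.ofReal (2 * exp (-ε ^ 2 / (2 * n * c))) := by
        rw [← ENNReal.ofReal_add (exp_pos _).le (exp_pos _).le, ← two_mul]

end ProbabilityTheory

section Rademacher

variable {Ω : Type*} [MeasurableSpace Ω] {μ : Measure Ω} [IsProbabilityMeasure μ] {X : Ω → ℝ}

lemma integral_eq_zero_of_ae_eq_one_or_neg_one (hX : Measurable X)
    (hae : ∀ᵐ ω ∂μ, X ω = 1 ∨ X ω = -1) (hhalf : μ {ω | X ω = 1} = ENNReal.ofReal (1 / 2)) :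
    μ[X] = 0 := by
  have hs : MeasurableSet {ω | X ω = 1} := hX (measurableSet_singleton 1)
  have hX_eq : X =ᵐ[μ] fun ω => {ω | X ω = 1}.indicator (fun _ => (2 : ℝ)) ω - 1 := by
    filter_upwards [hae] with ω hω
    rcases hω with h | h <;> norm_num [Set.indicator, h]
  rw [integral_congr_ae hX_eq, integral_sub ((integrable_const _).indicator hs)
    (integrable_const _), integral_indicator_const _ hs, measureReal_def, hhalf]
  norm_num

lemma hasSubgaussianMGF_one_of_ae_eq_one_or_neg_one (hX : Measurable X)
    (hae : ∀ᵐ ω ∂μ, X ω = 1 ∨ X ω = -1) (hhalf : μ {ω | X ω = 1} = ENNReal.ofReal (1 / 2)) :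
    HasSubgaussianMGF X 1 μ := by
  have hIcc : ∀ᵐ ω ∂μ, X ω ∈ Set.Icc (-1) 1 := by
    filter_upwards [hae] with ω hω
    rcases hω with h | h <;> norm_num [h]
  convert hasSubgaussianMGF_of_mem_Icc_of_integral_eq_zero hX.aemeasurable hIcc
    (integral_eq_zero_of_ae_eq_one_or_neg_one hX hae hhalf)
  norm_num

end Rademacher

section Dyadic

variable {α : ℝ}

noncomputable def dyadicThreshold (α : ℝ) (j : ℕ) : ℝ := √(16 * 2 ^ j * log (log (2 ^ j) / α))

lemma one_lt_log_two_pow_div (hα0 : 0 < α) (hα1 : α < 1) {j : ℕ} (hj : 2 ≤ j) :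
    1 < log (2 ^ j) / α := by
  have : (1 : ℝ) ≤ j * log 2 :=
    calc (1 : ℝ) ≤ 2 * log 2 := by linarith [log_two_gt_d9]
      _ ≤ j * log 2 := by gcongr; exact_mod_cast hj
  rw [lt_div_iff₀ hα0, log_pow]
  linarith

lemma dyadicThreshold_le (hα0 : 0 < α) (hα1 : α < 1) {j n : ℕ} (hj : 2 ≤ j) (hn : 2 ^ j ≤ n) :
    dyadicThreshold α j ≤ √(16 * n * log (log n / α)) := by
  have hx := one_lt_log_two_pow_div hα0 hα1 hj
  have hn' : (2 : ℝ) ^ j ≤ n := by exact_mod_cast hn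
  unfold dyadicThreshold
  gcongr
  exact (log_pos hx).le

lemma exp_neg_dyadicThreshold_sq (hα0 : 0 < α) (hα1 : α < 1) {j : ℕ} (hj : 2 ≤ j) :
    exp (-dyadicThreshold α j ^ 2 / (2 * 2 ^ (j + 1))) = (α / log (2 ^ j)) ^ 4 := by
  have hx := one_lt_log_two_pow_div hα0 hα1 hj
  have hsq : dyadicThreshold α j ^ 2 = 16 * 2 ^ j * log (log (2 ^ j) / α) :=
    sq_sqrt (by have := log_pos hx; positivity)
  calc exp (-dyadicThreshold α j ^ 2 / (2 * 2 ^ (j + 1)))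
      = exp (-log (log (2 ^ j) / α)) ^ 4 := by
        rw [hsq, ← exp_nat_mul]
        congr 1
        field_simp
        ring
    _ = (α / log (2 ^ j)) ^ 4 := by rw [exp_neg, exp_log (by linarith), inv_div]

/-- The blocks contribute a telescoping series whose sum is `2α/3`. -/
lemma two_mul_div_log_two_pow_pow_four_le (hα0 : 0 < α) (hα1 : α < 1) (i : ℕ) :
    2 * (α / log (2 ^ (i + 4))) ^ 4 ≤ 2 * α / (i + 3) - 2 * α / (i + 4) := by
  have hlog : ((i : ℝ) + 4) / 2 ≤ log (2 ^ (i + 4)) := by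
    rw [log_pow]; push_cast; nlinarith [log_two_gt_d9]
  have hcube : 16 * α ^ 3 * ((i : ℝ) + 3) ≤ ((i : ℝ) + 4) ^ 3 := by
    have : α ^ 3 ≤ 1 := pow_le_one₀ hα0.le hα1.le
    nlinarith [sq_nonneg ((i : ℝ) + 4), (by positivity : (0 : ℝ) ≤ i)]
  have hlog_pos : 0 < log (2 ^ (i + 4) : ℝ) := by linarith [(by positivity : (0 : ℝ) ≤ i)]
  have hratio : α / log (2 ^ (i + 4)) ≤ 2 * α / (i + 4) := by
    rw [div_le_div_iff₀ hlog_pos (by positivity)]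
    nlinarith
  have hratio_nonneg : 0 ≤ α / log (2 ^ (i + 4)) := by positivity
  calc 2 * (α / log (2 ^ (i + 4))) ^ 4 ≤ 2 * (2 * α / (i + 4)) ^ 4 := by gcongr
    _ = 2 * α / ((i + 3) * (i + 4)) * (16 * α ^ 3 * (i + 3) / (i + 4) ^ 3) := by
        field_simp
        ring
    _ ≤ 2 * α / ((i + 3) * (i + 4)) * 1 := by
        gcongr
        rw [div_le_one (by positivity)]
        exact hcube
    _ = 2 * α / (i + 3) - 2 * α / (i + 4) := by
        field_simp
        ring

lemma sixteen_le_of_mul_log_four_div_le (hα0 : 0 < α) (hα1 : α < 1) {n : ℕ}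
    (hn : 16 * log (4 / α) ≤ n) : 16 ≤ n := by
  have : 1 ≤ log (4 / α) := by
    rw [le_log_iff_exp_le (by positivity), le_div_iff₀ hα0]
    nlinarith [exp_one_lt_d9]
  exact_mod_cast (by linarith : (16 : ℝ) ≤ n)

lemma abs_le_sqrt_of_forall_dyadicThreshold (hα0 : 0 < α) (hα1 : α < 1) {s : ℕ → ℝ}
    (hs : ∀ i, ∀ k ≤ 2 ^ (i + 5), |s k| < dyadicThreshold α (i + 4)) {n : ℕ} (hn : 16 ≤ n) :
    |s n| ≤ √(16 * n * log (log n / α)) := by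
  have hn0 : n ≠ 0 := by omega
  have h4 : 4 ≤ Nat.log 2 n := Nat.le_log_of_pow_le (by norm_num) hn
  obtain ⟨i, hi⟩ : ∃ i, Nat.log 2 n = i + 4 := ⟨Nat.log 2 n - 4, by omega⟩
  have hlow : 2 ^ (i + 4) ≤ n := hi ▸ Nat.pow_log_le_self 2 hn0
  have hhigh : n ≤ 2 ^ (i + 5) := (hi ▸ Nat.lt_pow_succ_log_self (by norm_num) n).le
  exact (hs i n hhigh).le.trans (dyadicThreshold_le hα0 hα1 (by omega) hlow)

end Dyadic

lemma measure_exists_le_dyadicThreshold_le_abs_sum {Ω : Type*} [MeasurableSpace Ω]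
    {μ : Measure Ω} [IsProbabilityMeasure μ] {X : ℕ → Ω → ℝ} (hX : ∀ i, Measurable (X i))
    (hind : iIndepFun X μ) (hsub : ∀ i, HasSubgaussianMGF (X i) 1 μ) {α : ℝ} (hα0 : 0 < α)
    (hα1 : α < 1) (i : ℕ) :
    μ {ω | ∃ k ≤ 2 ^ (i + 5), dyadicThreshold α (i + 4) ≤ |∑ j ∈ range k, X j ω|}
      ≤ ENNReal.ofReal (2 * α / (i + 3) - 2 * α / (i + 4)) := by
  refine (HasSubgaussianMGF.measure_exists_le_abs_sum_range_ge_le hX hind hsub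
    (ε := dyadicThreshold α (i + 4)) (sqrt_nonneg _) _).trans (ENNReal.ofReal_le_ofReal ?_)
  have hcast : 2 * ((2 ^ (i + 5) : ℕ) : ℝ) * ((1 : ℝ≥0) : ℝ) = 2 * 2 ^ (i + 4 + 1) := by
    push_cast
    ring
  rw [hcast, exp_neg_dyadicThreshold_sq hα0 hα1 (by omega)]
  exact two_mul_div_log_two_pow_pow_four_le hα0 hα1 i

/-- Finite-time LIL for the simple random walk: there is an absolute constant `K > 0`
such that for i.i.d. fair coin flips `Aᵢ ∈ {−1,+1}` and any `α ∈ (0,1)`, with probability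
at least `1 − α`, simultaneously for all `n ≥ K ln(4/α)`,
`|Sₙ| ≤ √(K n ln(ln n / α))`. -/
theorem fair_coin_finite_time_LIL :
    ∃ K : ℝ, 0 < K ∧
      ∀ (Ω : Type) [MeasurableSpace Ω] (μ : Measure Ω), IsProbabilityMeasure μ →
      ∀ (A : ℕ → Ω → ℝ),
        (∀ i, Measurable (A i)) →
        iIndepFun A μ →
        (∀ i, ∀ᵐ ω ∂μ, A i ω = 1 ∨ A i ω = -1) →
        (∀ i, μ {ω | A i ω = 1} = ENNReal.ofReal (1 / 2)) →
        ∀ (α : ℝ), 0 < α → α < 1 →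
        ENNReal.ofReal (1 - α) ≤
          μ {ω | ∀ n : ℕ, K * Real.log (4 / α) ≤ n →
            |∑ i ∈ Finset.range n, A i ω| ≤ Real.sqrt (K * n * Real.log (Real.log n / α))} := by
  refine ⟨16, by norm_num, fun Ω _ μ _ A hA hind hae hhalf α hα0 hα1 => ?_⟩
  have hsub i : HasSubgaussianMGF (A i) 1 μ :=
    hasSubgaussianMGF_one_of_ae_eq_one_or_neg_one (hA i) (hae i) (hhalf i)
  set bad : ℕ → Set Ω := fun i =>
    {ω | ∃ k ≤ 2 ^ (i + 5), dyadicThreshold α (i + 4) ≤ |∑ j ∈ range k, A j ω|}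
  have hbad : μ (⋃ i, bad i) ≤ ENNReal.ofReal α := by
    refine (measure_iUnion_le_ofReal_of_le_sub (u := fun i : ℕ => 2 * α / (i + 3))
      (fun i j hij => by dsimp only; gcongr) (fun i => by positivity)
      fun i => (measure_exists_le_dyadicThreshold_le_abs_sum hA hind hsub hα0 hα1 i).trans_eq
        (by push_cast; ring_nf)).trans ?_
    exact ENNReal.ofReal_le_ofReal (by norm_num; linarith)
  have hgood : (⋃ i, bad i)ᶜ ⊆ {ω | ∀ n : ℕ, 16 * log (4 / α) ≤ n →
      |∑ i ∈ range n, A i ω| ≤ √(16 * n * log (log n / α))} := fun ω hω n hn => by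
    simp only [bad, Set.compl_iUnion, Set.mem_iInter, Set.mem_compl_iff, Set.mem_ofPred_eq,
      not_exists, not_and, not_le] at hω
    exact abs_le_sqrt_of_forall_dyadicThreshold hα0 hα1 hω
      (sixteen_le_of_mul_log_four_div_le hα0 hα1 hn)
  rw [ENNReal.ofReal_sub _ hα0.le, ENNReal.ofReal_one, tsub_le_iff_right]
  calc 1 = μ ((⋃ i, bad i)ᶜ ∪ ⋃ i, bad i) := by rw [Set.compl_union_self, measure_univ]
    _ ≤ μ ((⋃ i, bad i)ᶜ) + μ (⋃ i, bad i) := measure_union_le _ _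
    _ ≤ _ := add_le_add (measure_mono hgood) hbad
end

section
/- Suppose b₁, b₂, c are positive real numbers, x is a positive real number with x ≥ 8·max(b₁·[ln ln]₊(x), b₂), and x − √(b₁·x·[ln ln]₊(x) + b₂·x) − c ≤ 0. Then √x ≤ √(b₁·[ln ln]₊(2c) + b₂) + √c. -/
/-!
The condition `x ≥ 8 · max (b₁ [ln ln]₊ x, b₂)` bounds `√(b₁ x [ln ln]₊ x + b₂ x)` by `x / 2`,
so `x ≤ 2c` and hence `[ln ln]₊ x ≤ [ln ln]₊ (2c)`. With `A = √(b₁ [ln ln]₊ (2c) + b₂)` the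
hypothesis becomes the quadratic inequality `(√x)² ≤ A √x + c` in `√x`, whose solutions satisfy
`√x ≤ A + √c`.
-/

/-- `[ln ln]₊(x) = ln ln (max (x, e^e))`. -/
noncomputable def lnlnPlus (x : ℝ) : ℝ :=
  Real.log (Real.log (max x (Real.exp (Real.exp 1))))

open Real

lemma exp_one_le_log_max_exp_exp (x : ℝ) : exp 1 ≤ log (max x (exp (exp 1))) := by
  calc exp 1 = log (exp (exp 1)) := (log_exp _).symm
    _ ≤ _ := log_le_log (exp_pos _) (le_max_right _ _)

lemma lnlnPlus_monotone : Monotone lnlnPlus := fun a _ hab =>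
  log_le_log ((exp_pos 1).trans_le (exp_one_le_log_max_exp_exp a))
    (log_le_log (lt_max_of_lt_right (exp_pos _)) (max_le_max_right _ hab))

lemma le_add_sqrt_of_sq_le_mul_add {t a c : ℝ} (ha : 0 ≤ a)
    (h : t ^ 2 ≤ a * t + c) : t ≤ a + √c := by
  by_contra! hlt
  have hc : c ≤ √c * √c := by rw [← sq, sq_sqrt']; exact le_max_left c 0
  have hsqrt_c : √c * √c ≤ √c * t := by gcongr; linarith
  nlinarith [sqrt_nonneg c]

lemma sqrt_mul_add_mul_le_half {p q x : ℝ} (hx : 0 ≤ x) (h : 8 * max p q ≤ x) :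
    √(p * x + q * x) ≤ x / 2 := by
  have hp : p ≤ x / 8 := by linarith [le_max_left p q]
  have hq : q ≤ x / 8 := by linarith [le_max_right p q]
  rw [sqrt_le_left (by positivity)]
  nlinarith

theorem iterlog_inversion_general (b₁ b₂ c x : ℝ) (hb₁ : 0 < b₁)
    (hx : 0 < x)
    (h8 : 8 * max (b₁ * lnlnPlus x) b₂ ≤ x)
    (hq : x - Real.sqrt (b₁ * x * lnlnPlus x + b₂ * x) - c ≤ 0) :
    Real.sqrt x ≤ Real.sqrt (b₁ * lnlnPlus (2 * c) + b₂) + Real.sqrt c := by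
  have hroot_half : √(b₁ * x * lnlnPlus x + b₂ * x) ≤ x / 2 := by
    rw [mul_right_comm]; exact sqrt_mul_add_mul_le_half hx.le h8
  have hlnln : lnlnPlus x ≤ lnlnPlus (2 * c) := lnlnPlus_monotone (by linarith)
  have hroot : √(b₁ * x * lnlnPlus x + b₂ * x) ≤ √(b₁ * lnlnPlus (2 * c) + b₂) * √x := by
    rw [← sqrt_mul' _ hx.le]
    gcongr
    calc b₁ * x * lnlnPlus x + b₂ * x = (b₁ * lnlnPlus x + b₂) * x := by ring
      _ ≤ (b₁ * lnlnPlus (2 * c) + b₂) * x := by gcongr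
  apply le_add_sqrt_of_sq_le_mul_add (sqrt_nonneg _)
  rw [sq_sqrt hx.le]
  linarith

/-- Inversion lemma for inequalities involving the iterated logarithm. -/
theorem iterlog_inversion (b₁ b₂ c x : ℝ) (hb₁ : 0 < b₁) (hb₂ : 0 < b₂) (hc : 0 < c)
    (hx : 0 < x)
    (h8 : 8 * max (b₁ * lnlnPlus x) b₂ ≤ x)
    (hq : x - Real.sqrt (b₁ * x * lnlnPlus x + b₂ * x) - c ≤ 0) :
    Real.sqrt x ≤ Real.sqrt (b₁ * lnlnPlus (2 * c) + b₂) + Real.sqrt c :=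
  iterlog_inversion_general b₁ b₂ c x hb₁ hx h8 hq
end
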